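/- arXiv:1712.01940 — 3 statements merged into one kernel-verified Lean document; each statement's English description precedes it below -/
import Mathlib

section
/- Let K be a field, let u and v be coprime positive integers, let σ_a, τ_a be commuting permutations of {0,…,u−1} such that ς_a := σ_a∘τ_a is a u-cycle, and let σ_b, τ_b be commuting permutations of {0,…,v−1} such that ς_b := σ_b∘τ_b is a v-cycle. Let Γ : {0,…,u−1}×{0,…,v−1}×{0,…,u−1}×{0,…,v−1} → K, let α ∈ K with α ≠ 0, let ε ∈ {1,−1} ⊆ K, and let β_a, β_b ∈ K satisfy β_b(α−1) = β_a(εα−1). Then the following six equations hold for all i,k,m ∈ {0,…,u−1} and j,l,n ∈ {0,…,v−1}: (E1) α³Γ(i,j,k,l) − αΓ(τ_a(i),τ_b(j),τ_a(k),τ_b(l)) = β_a(1−εα)(β_a+αβ_b); (E2) α³Γ(i,j,k,l) − αΓ(τ_a(i),τ_b(j),τ_a(k),τ_b(l)) = β_b(1−α)(β_a+αβ_b); (E3) α³Γ(i,j,σ_a(m),σ_b(n)) − αΓ(τ_a(i),τ_b(j),m,n) = β_a(αβ_b(1−ε)+β_a(1−α²)); (E4) α³Γ(i,j,σ_a(m),σ_b(n))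 − αΓ(τ_a(i),τ_b(j),m,n) = β_b(αβ_a(ε−1)+β_b(1−α²)); (E5) α³Γ(σ_a(k),σ_b(l),σ_a(m),σ_b(n)) − αΓ(k,l,m,n) = β_a(εβ_b+αβ_a)(ε−α); (E6) α³Γ(σ_a(k),σ_b(l),σ_a(m),σ_b(n)) − αΓ(k,l,m,n) = β_b(β_b+εαβ_a)(1−α), if and only if Γ is constant, equal to Γ₀ := Γ(0,0,0,0), and (α²−1)Γ₀ = (β_aβ_b/α)(1−εα²). -/
/-- A permutation of `Fin n` is an `n`-cycle (full cycle) iff it acts transitively. -/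
def IsFullCycle {n : ℕ} (ς : Equiv.Perm (Fin n)) : Prop :=
  ∀ i j : Fin n, ∃ m : ℕ, (ς ^ m) i = j

lemma IsFullCycle.orderOf_eq {n : ℕ} (hn : 0 < n) {ς : Equiv.Perm (Fin n)}
    (h : IsFullCycle ς) : orderOf ς = n := by
  match n, hn with
  | 1, _ =>
    have hς : ς = 1 := Equiv.ext fun x => Subsingleton.elim _ _
    simp [hς]
  | (n+2), _ =>
    have hfix : ∀ x : Fin (n+2), ς x ≠ x := by
      intro x hx
      obtain ⟨y, hy⟩ := exists_ne x
      have hfp : ∀ m, (ς ^ m) x = x := by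
        intro m
        induction m with
        | zero => rfl
        | succ m ih => rw [pow_succ, Equiv.Perm.mul_apply, hx, ih]
      obtain ⟨m, hm⟩ := h x y
      exact hy (hm.symm.trans (hfp m))
    have hcyc : ς.IsCycle := by
      refine ⟨⟨0, by omega⟩, hfix _, fun y _ => ?_⟩
      obtain ⟨m, hm⟩ := h _ y
      exact ⟨(m : ℤ), by simpa using hm⟩
    have hsupp : ς.support = Finset.univ :=
      Finset.eq_univ_iff_forall.mpr fun x => Equiv.Perm.mem_support.mpr (hfix x)
    rw [hcyc.orderOf, hsupp, Finset.card_univ, Fintype.card_fin]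


/-- equations (E1)–(E6) hold for all indices iff Γ is constant
equal to Γ₀ := Γ(0,0,0,0) and (α²−1)Γ₀ = (β_aβ_b/α)(1−εα²). -/
theorem stmt13 (K : Type) [Field K] (u v : ℕ) (hu : 0 < u) (hv : 0 < v)
    (huv : Nat.Coprime u v)
    (σa τa : Equiv.Perm (Fin u)) (σb τb : Equiv.Perm (Fin v))
    (hca : Commute σa τa) (hcb : Commute σb τb)
    (ha : IsFullCycle (σa * τa)) (hb : IsFullCycle (σb * τb))
    (Γ : Fin u → Fin v → Fin u → Fin v → K)
    (α : K) (hα : α ≠ 0) (ε : K) (hε : ε = 1 ∨ ε = -1) (βa βb : K)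
    (h : βb * (α - 1) = βa * (ε * α - 1)) :
    (∀ (i k m : Fin u) (j l n : Fin v),
        (α ^ 3 * Γ i j k l - α * Γ (τa i) (τb j) (τa k) (τb l)
          = βa * (1 - ε * α) * (βa + α * βb)) ∧
        (α ^ 3 * Γ i j k l - α * Γ (τa i) (τb j) (τa k) (τb l)
          = βb * (1 - α) * (βa + α * βb)) ∧
        (α ^ 3 * Γ i j (σa m) (σb n) - α * Γ (τa i) (τb j) m n
          = βa * (α * βb * (1 - ε) + βa * (1 - α ^ 2))) ∧
        (α ^ 3 * Γ i j (σa m) (σb n) - α * Γ (τa i) (τb j) m n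
          = βb * (α * βa * (ε - 1) + βb * (1 - α ^ 2))) ∧
        (α ^ 3 * Γ (σa k) (σb l) (σa m) (σb n) - α * Γ k l m n
          = βa * (ε * βb + α * βa) * (ε - α)) ∧
        (α ^ 3 * Γ (σa k) (σb l) (σa m) (σb n) - α * Γ k l m n
          = βb * (βb + ε * α * βa) * (1 - α)))
    ↔ ((∀ (i k : Fin u) (j l : Fin v), Γ i j k l = Γ ⟨0, hu⟩ ⟨0, hv⟩ ⟨0, hu⟩ ⟨0, hv⟩) ∧
        (α ^ 2 - 1) * Γ ⟨0, hu⟩ ⟨0, hv⟩ ⟨0, hu⟩ ⟨0, hv⟩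
          = βa * βb / α * (1 - ε * α ^ 2)) := by
  have hε2 : ε ^ 2 = 1 := by rcases hε with rfl | rfl <;> norm_num
  have hα3 : α ^ 3 ≠ 0 := pow_ne_zero 3 hα
  constructor
  · intro H
    have hR3 : βa * (α * βb * (1 - ε) + βa * (1 - α ^ 2))
        = βa * (1 - ε * α) * (βa + α * βb) := by
      linear_combination (α * ε * βa) * h + (α ^ 2 * βa ^ 2) * hε2
    have hR5 : βa * (ε * βb + α * βa) * (ε - α)
        = βa * (1 - ε * α) * (βa + α * βb) := by
      linear_combination (-(βa * (1 - ε * α))) * h + (βa * βb + βa ^ 2 * α ^ 2) * hε2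
    have hP : ∀ (i : Fin u) (j : Fin v) (m : Fin u) (n : Fin v),
        Γ i j ((σa * τa) m) ((σb * τb) n) = Γ i j m n := by
      intro i j m n
      have e1 := (H i m m j n n).1
      have e3 := (H i m (τa m) j n (τb n)).2.2.1
      have key : α ^ 3 * Γ i j (σa (τa m)) (σb (τb n)) = α ^ 3 * Γ i j m n := by
        linear_combination e3 - e1 + hR3
      exact mul_left_cancel₀ hα3 key
    have hF : ∀ (k : Fin u) (l : Fin v) (m : Fin u) (n : Fin v),
        Γ ((σa * τa) k) ((σb * τb) l) ((σa * τa) m) ((σb * τb) n) = Γ k l m n := by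
      intro k l m n
      have e1 := (H k m m l n n).1
      have e5 := (H k (τa k) (τa m) l (τb l) (τb n)).2.2.2.2.1
      have key : α ^ 3 * Γ (σa (τa k)) (σb (τb l)) (σa (τa m)) (σb (τb n))
          = α ^ 3 * Γ k l m n := by
        linear_combination e5 - e1 + hR5
      exact mul_left_cancel₀ hα3 key
    have hPit : ∀ (t : ℕ) (i : Fin u) (j : Fin v) (m : Fin u) (n : Fin v),
        Γ i j (((σa * τa) ^ t) m) (((σb * τb) ^ t) n) = Γ i j m n := by
      intro t
      induction t with
      | zero => intro i j m n; rfl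
      | succ t ih =>
        intro i j m n
        simp only [pow_succ, Equiv.Perm.mul_apply]
        rw [ih]
        exact hP i j m n
    have hFit : ∀ (t : ℕ) (k : Fin u) (l : Fin v) (m : Fin u) (n : Fin v),
        Γ (((σa * τa) ^ t) k) (((σb * τb) ^ t) l) (((σa * τa) ^ t) m) (((σb * τb) ^ t) n)
          = Γ k l m n := by
      intro t
      induction t with
      | zero => intro k l m n; rfl
      | succ t ih =>
        intro k l m n
        simp only [pow_succ, Equiv.Perm.mul_apply]
        rw [ih]
        exact hF k l m n
    have hordA : orderOf (σa * τa) = u := IsFullCycle.orderOf_eq hu ha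
    have hordB : orderOf (σb * τb) = v := IsFullCycle.orderOf_eq hv hb
    have hreach : ∀ (k k' : Fin u) (l l' : Fin v),
        ∃ t : ℕ, ((σa * τa) ^ t) k = k' ∧ ((σb * τb) ^ t) l = l' := by
      intro k k' l l'
      obtain ⟨m1, hm1⟩ := ha k k'
      obtain ⟨m2, hm2⟩ := hb l l'
      obtain ⟨t, ht1, ht2⟩ := Nat.chineseRemainder huv m1 m2
      have ht1' : t ≡ m1 [MOD orderOf (σa * τa)] := by rw [hordA]; exact ht1
      have ht2' : t ≡ m2 [MOD orderOf (σb * τb)] := by rw [hordB]; exact ht2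
      exact ⟨t, by rw [pow_eq_pow_iff_modEq.mpr ht1']; exact hm1,
        by rw [pow_eq_pow_iff_modEq.mpr ht2']; exact hm2⟩
    have hconst : ∀ (i k : Fin u) (j l : Fin v),
        Γ i j k l = Γ ⟨0, hu⟩ ⟨0, hv⟩ ⟨0, hu⟩ ⟨0, hv⟩ := by
      intro i k j l
      obtain ⟨t1, h1a, h1b⟩ := hreach k i l j
      obtain ⟨t2, h2a, h2b⟩ := hreach i ⟨0, hu⟩ j ⟨0, hv⟩
      have e1 := hPit t1 i j k l
      rw [h1a, h1b] at e1
      have e2 := hFit t2 i j i j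
      rw [h2a, h2b] at e2
      exact (e2.trans e1).symm
    refine ⟨hconst, ?_⟩
    have e5 := (H ⟨0, hu⟩ ⟨0, hu⟩ ⟨0, hu⟩ ⟨0, hv⟩ ⟨0, hv⟩ ⟨0, hv⟩).2.2.2.2.1
    rw [hconst (σa ⟨0, hu⟩) (σa ⟨0, hu⟩) (σb ⟨0, hv⟩) (σb ⟨0, hv⟩)] at e5
    field_simp
    linear_combination e5 + (βa * ε * α) * h + (βa * βb + βa ^ 2 * α ^ 2) * hε2
  · rintro ⟨hc, h0⟩ i k m j l n
    have h0' : (α ^ 2 - 1) * Γ ⟨0, hu⟩ ⟨0, hv⟩ ⟨0, hu⟩ ⟨0, hv⟩ * α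
        = βa * βb * (1 - ε * α ^ 2) := by
      field_simp at h0
      linear_combination h0
    refine ⟨?_, ?_, ?_, ?_, ?_, ?_⟩ <;> simp only [hc]
    · linear_combination h0' - βa * h
    · linear_combination h0' + α * βb * h
    · linear_combination h0' - (βa + α * ε * βa) * h - α ^ 2 * βa ^ 2 * hε2
    · linear_combination h0' + βb * (1 + α) * h
    · linear_combination h0' - βa * ε * α * h - (βa * βb + βa ^ 2 * α ^ 2) * hε2
    · linear_combination h0' + βb * h
end

section
/- Let K be a field, let u and v be coprime positive integers, let σ_a, τ_a be commuting permutations of {0,…,u−1} such that ς_a := σ_a∘τ_a is a u-cycle, and let σ_b, τ_b be commuting permutations of {0,…,v−1} such that ς_b := σ_b∘τ_b is a v-cycle. Let Γ : {0,…,u−1}×{0,…,v−1}×{0,…,u−1}×{0,…,v−1} → K, let α ∈ K with α ≠ 0, let ε ∈ {1,−1} ⊆ K, and let β_a, β_b ∈ K satisfy β_b(α−1) = β_a(εα−1). Then equations (E1)–(E6) together with (E7): β_aβ_b(β_bε(1+α) − β_a(1+εα)) = α²β_a(1+α)Γ(i,j,k,l) − β_b(1+εα)Γ(τ_a(i),τ_b(j),τ_a(k),τ_b(l))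 + α(β_b−εβ_a)Γ(τ_a(i),τ_b(j),m,n) − εα²(β_a−β_b)Γ(i,j,σ_a(m),σ_b(n)) − α²β_b(1+εα)Γ(σ_a(k),σ_b(l),σ_a(m),σ_b(n)) + β_a(1+α)Γ(k,l,m,n), hold for all i,k,m ∈ {0,…,u−1} and j,l,n ∈ {0,…,v−1} if and only if: Γ is constant equal to Γ₀ := Γ(0,0,0,0), (α²−1)Γ₀ = (β_aβ_b/α)(1−εα²), and β_aβ_b(β_bε(1+α) − β_a(1+εα)) = Γ₀(β_a(1+α)(1−εα+α²) − β_b(1+εα)(1−α+α²)). -/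
lemma fullCycle_pow_self {n : ℕ} (hn : 0 < n) {ς : Equiv.Perm (Fin n)}
    (h : IsFullCycle ς) : ς ^ n = 1 := by
  rcases eq_or_lt_of_le (Nat.one_le_iff_ne_zero.mpr hn.ne') with h1 | h2
  · have : Subsingleton (Fin n) := by rw [← h1]; infer_instance
    exact Subsingleton.elim _ _
  · haveI : Nontrivial (Fin n) := ⟨⟨⟨0, hn⟩, ⟨1, h2⟩, by simp⟩⟩
    have hfix : ∀ x, ς x ≠ x := by
      intro x hx
      have key : ∀ m : ℕ, (ς ^ m) x = x := by
        intro m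
        induction m with
        | zero => simp
        | succ t ih => rw [pow_succ, Equiv.Perm.mul_apply, hx, ih]
      obtain ⟨y, hy⟩ := exists_ne x
      obtain ⟨m, hm⟩ := h x y
      exact hy ((key m ▸ hm).symm)
    have hcyc : ς.IsCycle := by
      refine ⟨⟨0, hn⟩, hfix _, fun y _ => ?_⟩
      obtain ⟨m, hm⟩ := h ⟨0, hn⟩ y
      exact ⟨m, by simpa using hm⟩
    have hsupp : ς.support = Finset.univ := by
      ext x; simp [Equiv.Perm.mem_support, hfix x]
    have hord : orderOf ς = n := by
      rw [hcyc.orderOf, hsupp, Finset.card_univ, Fintype.card_fin]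
    have := pow_orderOf_eq_one ς
    rwa [hord] at this

lemma joint_trans {u v : ℕ} (hu : 0 < u) (hv : 0 < v) (huv : Nat.Coprime u v)
    {ςa : Equiv.Perm (Fin u)} {ςb : Equiv.Perm (Fin v)}
    (ha : IsFullCycle ςa) (hb : IsFullCycle ςb)
    (x x' : Fin u) (y y' : Fin v) :
    ∃ m : ℕ, (ςa ^ m) x = x' ∧ (ςb ^ m) y = y' := by
  obtain ⟨m₁, h₁⟩ := ha x x'
  obtain ⟨m₂, h₂⟩ := hb y y'
  obtain ⟨N, hN1, hN2⟩ := Nat.chineseRemainder huv m₁ m₂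
  have eA : N % u = m₁ % u := hN1
  have eB : N % v = m₂ % v := hN2
  have hA : ςa ^ u = 1 := fullCycle_pow_self hu ha
  have hB : ςb ^ v = 1 := fullCycle_pow_self hv hb
  refine ⟨N, ?_, ?_⟩
  · have : ςa ^ N = ςa ^ m₁ := by
      rw [pow_eq_pow_mod N hA, pow_eq_pow_mod m₁ hA, eA]
    rw [this]; exact h₁
  · have : ςb ^ N = ςb ^ m₂ := by
      rw [pow_eq_pow_mod N hB, pow_eq_pow_mod m₂ hB, eB]
    rw [this]; exact h₂

/-- equations (E1)–(E7) hold for all indices iff Γ is constant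
equal to Γ₀ := Γ(0,0,0,0), (α²−1)Γ₀ = (β_aβ_b/α)(1−εα²), and
β_aβ_b(β_bε(1+α) − β_a(1+εα)) = Γ₀(β_a(1+α)(1−εα+α²) − β_b(1+εα)(1−α+α²)). -/
theorem stmt14 (K : Type) [Field K] (u v : ℕ) (hu : 0 < u) (hv : 0 < v)
    (huv : Nat.Coprime u v)
    (σa τa : Equiv.Perm (Fin u)) (σb τb : Equiv.Perm (Fin v))
    (hca : Commute σa τa) (hcb : Commute σb τb)
    (ha : IsFullCycle (σa * τa)) (hb : IsFullCycle (σb * τb))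
    (Γ : Fin u → Fin v → Fin u → Fin v → K)
    (α : K) (hα : α ≠ 0) (ε : K) (hε : ε = 1 ∨ ε = -1) (βa βb : K)
    (h : βb * (α - 1) = βa * (ε * α - 1)) :
    (∀ (i k m : Fin u) (j l n : Fin v),
        (α ^ 3 * Γ i j k l - α * Γ (τa i) (τb j) (τa k) (τb l)
          = βa * (1 - ε * α) * (βa + α * βb)) ∧
        (α ^ 3 * Γ i j k l - α * Γ (τa i) (τb j) (τa k) (τb l)
          = βb * (1 - α) * (βa + α * βb)) ∧
        (α ^ 3 * Γ i j (σa m) (σb n) - α * Γ (τa i) (τb j) m n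
          = βa * (α * βb * (1 - ε) + βa * (1 - α ^ 2))) ∧
        (α ^ 3 * Γ i j (σa m) (σb n) - α * Γ (τa i) (τb j) m n
          = βb * (α * βa * (ε - 1) + βb * (1 - α ^ 2))) ∧
        (α ^ 3 * Γ (σa k) (σb l) (σa m) (σb n) - α * Γ k l m n
          = βa * (ε * βb + α * βa) * (ε - α)) ∧
        (α ^ 3 * Γ (σa k) (σb l) (σa m) (σb n) - α * Γ k l m n
          = βb * (βb + ε * α * βa) * (1 - α)) ∧
        (βa * βb * (βb * ε * (1 + α) - βa * (1 + ε * α))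
          = α ^ 2 * βa * (1 + α) * Γ i j k l
            - βb * (1 + ε * α) * Γ (τa i) (τb j) (τa k) (τb l)
            + α * (βb - ε * βa) * Γ (τa i) (τb j) m n
            - ε * α ^ 2 * (βa - βb) * Γ i j (σa m) (σb n)
            - α ^ 2 * βb * (1 + ε * α) * Γ (σa k) (σb l) (σa m) (σb n)
            + βa * (1 + α) * Γ k l m n))
    ↔ ((∀ (i k : Fin u) (j l : Fin v), Γ i j k l = Γ ⟨0, hu⟩ ⟨0, hv⟩ ⟨0, hu⟩ ⟨0, hv⟩) ∧
        (α ^ 2 - 1) * Γ ⟨0, hu⟩ ⟨0, hv⟩ ⟨0, hu⟩ ⟨0, hv⟩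
          = βa * βb / α * (1 - ε * α ^ 2) ∧
        βa * βb * (βb * ε * (1 + α) - βa * (1 + ε * α))
          = Γ ⟨0, hu⟩ ⟨0, hv⟩ ⟨0, hu⟩ ⟨0, hv⟩ *
            (βa * (1 + α) * (1 - ε * α + α ^ 2)
              - βb * (1 + ε * α) * (1 - α + α ^ 2))) := by
  have key : βa * (1 - ε * α) = βb * (1 - α) := by linear_combination h
  have hε2 : ε ^ 2 = 1 := by rcases hε with rfl | rfl <;> norm_num
  have hτa : ∀ m, τa (σa m) = (σa * τa) m := by
    intro m; rw [hca.eq, Equiv.Perm.mul_apply]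
  have hτb : ∀ n, τb (σb n) = (σb * τb) n := by
    intro n; rw [hcb.eq, Equiv.Perm.mul_apply]
  constructor
  · intro H
    -- invariance in the last pair of arguments
    have invL : ∀ (i : Fin u) (j : Fin v) (m : Fin u) (n : Fin v),
        Γ i j ((σa * τa) m) ((σb * τb) n) = Γ i j m n := by
      intro i j m n
      have e1 := (H (τa.symm i) (σa m) m (τb.symm j) (σb n) n).1
      have e3 := (H (τa.symm i) (σa m) m (τb.symm j) (σb n) n).2.2.1
      simp only [Equiv.apply_symm_apply] at e1 e3
      have hc13 : βa * (1 - ε * α) * (βa + α * βb)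
          = βa * (α * βb * (1 - ε) + βa * (1 - α ^ 2)) := by
        linear_combination -ε*α*βa*key - βa^2*α^2*hε2
      have hmain : α * Γ i j (τa (σa m)) (τb (σb n)) = α * Γ i j m n := by
        linear_combination e3 - e1 - hc13
      rw [hτa m, hτb n] at hmain
      exact mul_left_cancel₀ hα hmain
    -- invariance in the first pair of arguments
    have invF : ∀ (i : Fin u) (j : Fin v) (m : Fin u) (n : Fin v),
        Γ ((σa * τa) i) ((σb * τb) j) m n = Γ i j m n := by
      intro i j m n
      have e5 := (H i (τa i) (σa.symm m) j (τb j) (σb.symm n)).2.2.2.2.1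
      have e3 := (H i (τa i) (σa.symm m) j (τb j) (σb.symm n)).2.2.1
      simp only [Equiv.apply_symm_apply] at e5 e3
      have hc53 : βa * (ε * βb + α * βa) * (ε - α)
          = βa * (α * βb * (1 - ε) + βa * (1 - α ^ 2)) := by
        linear_combination -βa*key + βa*βb*hε2
      have hmain : α ^ 3 * Γ (σa (τa i)) (σb (τb j)) m n = α ^ 3 * Γ i j m n := by
        linear_combination e5 - e3 + hc53
      have := mul_left_cancel₀ (pow_ne_zero 3 hα) hmain
      rwa [← Equiv.Perm.mul_apply σa τa i, ← Equiv.Perm.mul_apply σb τb j] at this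
    have iterL : ∀ (t : ℕ) (i : Fin u) (j : Fin v) (k : Fin u) (l : Fin v),
        Γ i j (((σa * τa) ^ t) k) (((σb * τb) ^ t) l) = Γ i j k l := by
      intro t
      induction t with
      | zero => intro i j k l; simp
      | succ s ih =>
        intro i j k l
        have ea : ((σa * τa) ^ (s+1)) k = ((σa * τa) ^ s) ((σa * τa) k) := by
          rw [pow_succ, Equiv.Perm.mul_apply]
        have eb : ((σb * τb) ^ (s+1)) l = ((σb * τb) ^ s) ((σb * τb) l) := by
          rw [pow_succ, Equiv.Perm.mul_apply]
        rw [ea, eb, ih, invL]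
    have iterF : ∀ (t : ℕ) (i : Fin u) (j : Fin v) (k : Fin u) (l : Fin v),
        Γ (((σa * τa) ^ t) i) (((σb * τb) ^ t) j) k l = Γ i j k l := by
      intro t
      induction t with
      | zero => intro i j k l; simp
      | succ s ih =>
        intro i j k l
        have ea : ((σa * τa) ^ (s+1)) i = ((σa * τa) ^ s) ((σa * τa) i) := by
          rw [pow_succ, Equiv.Perm.mul_apply]
        have eb : ((σb * τb) ^ (s+1)) j = ((σb * τb) ^ s) ((σb * τb) j) := by
          rw [pow_succ, Equiv.Perm.mul_apply]
        rw [ea, eb, ih, invF]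
    have hconst : ∀ (i k : Fin u) (j l : Fin v),
        Γ i j k l = Γ ⟨0, hu⟩ ⟨0, hv⟩ ⟨0, hu⟩ ⟨0, hv⟩ := by
      intro i k j l
      obtain ⟨m1, hm1a, hm1b⟩ := joint_trans hu hv huv ha hb k ⟨0, hu⟩ l ⟨0, hv⟩
      obtain ⟨m2, hm2a, hm2b⟩ := joint_trans hu hv huv ha hb i ⟨0, hu⟩ j ⟨0, hv⟩
      calc Γ i j k l = Γ i j ⟨0, hu⟩ ⟨0, hv⟩ := by rw [← hm1a, ← hm1b, iterL]
        _ = Γ ⟨0, hu⟩ ⟨0, hv⟩ ⟨0, hu⟩ ⟨0, hv⟩ := by rw [← hm2a, ← hm2b, iterF]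
    refine ⟨hconst, ?_, ?_⟩
    · have e1z := (H ⟨0, hu⟩ ⟨0, hu⟩ ⟨0, hu⟩ ⟨0, hv⟩ ⟨0, hv⟩ ⟨0, hv⟩).1
      simp only [hconst] at e1z
      rw [div_mul_eq_mul_div, eq_div_iff hα]
      linear_combination e1z + βa*key
    · have e7z := (H ⟨0, hu⟩ ⟨0, hu⟩ ⟨0, hu⟩ ⟨0, hv⟩ ⟨0, hv⟩ ⟨0, hv⟩).2.2.2.2.2.2
      simp only [hconst] at e7z
      linear_combination e7z
  · rintro ⟨hconst, h2, h3⟩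
    rw [div_mul_eq_mul_div, eq_div_iff hα] at h2
    intro i k m j l n
    refine ⟨?_, ?_, ?_, ?_, ?_, ?_, ?_⟩ <;> simp only [hconst]
    · linear_combination h2 - βa*key
    · linear_combination h2 + α*βb*key
    · linear_combination h2 - βa*(1+ε*α)*key - βa^2*α^2*hε2
    · linear_combination h2 + βb*(1+α)*key
    · linear_combination h2 - ε*α*βa*key - (βa^2*α^2 + βa*βb)*hε2
    · linear_combination h2 + βb*key
    · linear_combination h3
end

section
/- In the setting of the family of examples with constant parameters (α, β_a, β_b, ε, and Γ_{i|j|k|l} = Γ for all i,j,k,l): if ε = 1 and α = 1, then r satisfies the braid equation if and only if β_a = β_b, or β_a ≠ β_b and 2Γ + 2β_aβ_b = 0. -/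
/-!
Comultiplicativity of `r` writes its coefficient at `[a,b] ⊗ [c,d]` as a convolution of
coefficients on smaller rectangles. For `a ⩿ b` and `c ⩿ d`, induction on the size of the
rectangle, starting from the group-like coefficients prescribed by `r₀`, shows that
`r([a,b] ⊗ [c,d])` only involves subintervals of `[φl c, φl d] ⊗ [φr a, φr b]`. The counit then
fixes one coefficient on each height-one rectangle, and on a height-two rectangle every
coefficient other than `Γ` is a product of the height-one parameters `α`, `β`. Every interval of
the poset `X` is short, so for `α = ε = 1` this determines `r` on the whole basis of `D ⊗ D`.
Expanding both sides of the braid equation on basis tensors, they agree except on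
`[a_i,b_j] ⊗ [a_k,b_l] ⊗ [a_m,b_n]`, where they differ by `(β_a - β_b)(2Γ + 2β_aβ_b)` times a
nonzero vector.
-/

open Finsupp

namespace BraidPaper

/-- The set of ordered pairs `Y = {(a,b) : a ≤ b}` indexing the basis of the
incidence coalgebra of `X`. -/
abbrev Y (X : Type) [PartialOrder X] : Type := {p : X × X // p.1 ≤ p.2}

/-- The incidence coalgebra `D` of `X`, modelled as the free `K`-module on `Y`. -/
abbrev Inc (K X : Type) [Field K] [PartialOrder X] : Type := Y X →₀ K

/-- `D ⊗ D`, modelled as the free `K`-module on `Y × Y`. -/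
abbrev Inc2 (K X : Type) [Field K] [PartialOrder X] : Type := (Y X × Y X) →₀ K

/-- `D ⊗ D ⊗ D`, modelled as the free `K`-module on `Y × Y × Y`. -/
abbrev Inc3 (K X : Type) [Field K] [PartialOrder X] : Type := (Y X × Y X × Y X) →₀ K

/-- `(D ⊗ D) ⊗ (D ⊗ D)`, modelled as the free `K`-module on `(Y × Y) × (Y × Y)`. -/
abbrev Inc4 (K X : Type) [Field K] [PartialOrder X] : Type :=
  ((Y X × Y X) × (Y X × Y X)) →₀ K

variable {K X : Type} [Field K] [PartialOrder X] [DecidableEq X]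
  [@DecidableRel X X (· ≤ ·)] [LocallyFiniteOrder X]

/-- The coefficients `λ_{a|b|c|d}^{e|f|g|h}` of a linear endomorphism of `D ⊗ D`
(defined to be `0` unless `a ≤ b`, `c ≤ d`, `e ≤ f` and `g ≤ h`). -/
noncomputable def lam (r : Inc2 K X →ₗ[K] Inc2 K X) (a b c d e f g h : X) : K :=
  if h1 : a ≤ b then if h2 : c ≤ d then if h3 : e ≤ f then if h4 : g ≤ h then
    (r (single (⟨(a, b), h1⟩, ⟨(c, d), h2⟩) 1)) (⟨(e, f), h3⟩, ⟨(g, h), h4⟩)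
  else 0 else 0 else 0 else 0

/-- The counit of `D ⊗ D`. -/
noncomputable def eps2 : Inc2 K X →ₗ[K] K :=
  Finsupp.lsum K fun pq =>
    if pq.1.1.1 = pq.1.1.2 ∧ pq.2.1.1 = pq.2.1.2 then LinearMap.id else 0

/-- The comultiplication of `D ⊗ D`. -/
noncomputable def comul2 : Inc2 K X →ₗ[K] Inc4 K X :=
  Finsupp.lsum K fun pq => LinearMap.toSpanSingleton K _ <|
    ∑ x ∈ (Finset.Icc pq.1.1.1 pq.1.1.2).attach,
      ∑ y ∈ (Finset.Icc pq.2.1.1 pq.2.1.2).attach,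
        single ((⟨(pq.1.1.1, x.1), (Finset.mem_Icc.mp x.2).1⟩,
                 ⟨(pq.2.1.1, y.1), (Finset.mem_Icc.mp y.2).1⟩),
                (⟨(x.1, pq.1.1.2), (Finset.mem_Icc.mp x.2).2⟩,
                 ⟨(y.1, pq.2.1.2), (Finset.mem_Icc.mp y.2).2⟩)) (1 : K)

/-- The tensor product `r ⊗ s` of two linear endomorphisms of `D ⊗ D`, in the
free-module model. -/
noncomputable def tmap (r s : Inc2 K X →ₗ[K] Inc2 K X) : Inc4 K X →ₗ[K] Inc4 K X :=
  Finsupp.lsum K fun pq => LinearMap.toSpanSingleton K _ <|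
    (r (single pq.1 1)).sum fun p a => (s (single pq.2 1)).sum fun q b =>
      single (p, q) (a * b)

/-- `r` is a coalgebra automorphism of `D ⊗ D`. -/
def IsCoalgAuto (r : Inc2 K X →ₗ[K] Inc2 K X) : Prop :=
  Function.Bijective ⇑r ∧ comul2 ∘ₗ r = tmap r r ∘ₗ comul2 ∧ eps2 ∘ₗ r = eps2

/-- `D ⊗ ε : D ⊗ D → D`. -/
noncomputable def rcu : Inc2 K X →ₗ[K] Inc K X :=
  Finsupp.lsum K fun pq => LinearMap.toSpanSingleton K _ <|
    if pq.2.1.1 = pq.2.1.2 then single pq.1 (1 : K) else 0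

/-- `ε ⊗ D : D ⊗ D → D`. -/
noncomputable def lcu : Inc2 K X →ₗ[K] Inc K X :=
  Finsupp.lsum K fun pq => LinearMap.toSpanSingleton K _ <|
    if pq.1.1.1 = pq.1.1.2 then single pq.2 (1 : K) else 0

/-- `(D ⊗ σ) ∘ (Δ ⊗ D)` where `σ := (D ⊗ ε) ∘ r`. -/
noncomputable def ndeg1 (r : Inc2 K X →ₗ[K] Inc2 K X) : Inc2 K X →ₗ[K] Inc2 K X :=
  Finsupp.lsum K fun pq => LinearMap.toSpanSingleton K _ <|
    ∑ x ∈ (Finset.Icc pq.1.1.1 pq.1.1.2).attach,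
      ((rcu ∘ₗ r) (single ((⟨(x.1, pq.1.1.2), (Finset.mem_Icc.mp x.2).2⟩ : Y X), pq.2) 1)).sum
        fun s a => single ((⟨(pq.1.1.1, x.1), (Finset.mem_Icc.mp x.2).1⟩ : Y X), s) a

/-- `(τ ⊗ D) ∘ (D ⊗ Δ)` where `τ := (ε ⊗ D) ∘ r`. -/
noncomputable def ndeg2 (r : Inc2 K X →ₗ[K] Inc2 K X) : Inc2 K X →ₗ[K] Inc2 K X :=
  Finsupp.lsum K fun pq => LinearMap.toSpanSingleton K _ <|
    ∑ y ∈ (Finset.Icc pq.2.1.1 pq.2.1.2).attach,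
      ((lcu ∘ₗ r) (single (pq.1, (⟨(pq.2.1.1, y.1), (Finset.mem_Icc.mp y.2).1⟩ : Y X)) 1)).sum
        fun s a => single (s, (⟨(y.1, pq.2.1.2), (Finset.mem_Icc.mp y.2).2⟩ : Y X)) a

/-- `r` is non-degenerate. -/
def NonDeg (r : Inc2 K X →ₗ[K] Inc2 K X) : Prop :=
  Function.Bijective ⇑(ndeg1 r) ∧ Function.Bijective ⇑(ndeg2 r)

/-- The set-map `r₀(a,c) = (ᵃc, aᶜ)` built from left translations `lt` (so
`ᵃc = lt a c`) and right translations `rt` (so `aᶜ = rt a c`). -/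
def r0map (lt rt : X → X → X) : X × X → X × X := fun p => (lt p.1 p.2, rt p.1 p.2)

/-- The set-map `r₀` is non-degenerate. -/
def NonDeg0 (lt rt : X → X → X) : Prop :=
  (∀ a : X, Function.Bijective (lt a)) ∧ (∀ c : X, Function.Bijective (fun a => rt a c))

def m12 (f : X × X → X × X) : X × X × X → X × X × X :=
  fun t => ((f (t.1, t.2.1)).1, (f (t.1, t.2.1)).2, t.2.2)

def m23 (f : X × X → X × X) : X × X × X → X × X × X := fun t => (t.1, f t.2)

/-- `f : X × X → X × X` is a set-theoretic solution of the braid equation. -/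
def Braid0 (f : X × X → X × X) : Prop :=
  m12 f ∘ m23 f ∘ m12 f = m23 f ∘ m12 f ∘ m23 f

/-- `r` induces `r₀` on `X × X`. -/
def Induces (r : Inc2 K X →ₗ[K] Inc2 K X) (lt rt : X → X → X) : Prop :=
  ∀ a c : X,
    r (single (⟨(a, a), le_refl a⟩, ⟨(c, c), le_refl c⟩) 1)
      = single (⟨(lt a c, lt a c), le_refl _⟩, ⟨(rt a c, rt a c), le_refl _⟩) 1

/-- `r ⊗ id` acting on `D ⊗ D ⊗ D`. -/
noncomputable def r12 (r : Inc2 K X →ₗ[K] Inc2 K X) : Inc3 K X →ₗ[K] Inc3 K X :=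
  Finsupp.lsum K fun t => LinearMap.toSpanSingleton K _ <|
    (r (single (t.1, t.2.1) 1)).sum fun p a => single (p.1, p.2, t.2.2) a

/-- `id ⊗ r` acting on `D ⊗ D ⊗ D`. -/
noncomputable def r23 (r : Inc2 K X →ₗ[K] Inc2 K X) : Inc3 K X →ₗ[K] Inc3 K X :=
  Finsupp.lsum K fun t => LinearMap.toSpanSingleton K _ <|
    (r (single t.2 1)).sum fun p a => single (t.1, p) a

/-- The braid equation `r₁₂ ∘ r₂₃ ∘ r₁₂ = r₂₃ ∘ r₁₂ ∘ r₂₃` on `D ⊗ D ⊗ D`. -/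
def BraidEqR (r : Inc2 K X →ₗ[K] Inc2 K X) : Prop :=
  r12 r ∘ₗ r23 r ∘ₗ r12 r = r23 r ∘ₗ r12 r ∘ₗ r23 r

/-- The height of the interval `[a,b]`: the length of its longest chain. -/
noncomputable def hgt (a b : X) : ℕ∞ := Set.chainHeight (Set.Icc a b) (· < ·) - 1

/-- `LBE(S,T)` for `T = [a,b]×[c,d]×[e,f] ⊇ S = [g,h]×[i,j]×[k,l]`. -/
noncomputable def LBE (r : Inc2 K X →ₗ[K] Inc2 K X) (lt rt : X → X → X)
    (a b c d e f g h i j k l : X) : K :=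
  ∑ x ∈ Finset.Icc a g, ∑ y ∈ Finset.Icc h b, ∑ w ∈ Finset.Icc c i,
  ∑ z ∈ Finset.Icc j d, ∑ u ∈ Finset.Icc e k, ∑ v ∈ Finset.Icc l f,
    lam r a b c d (lt a w) (lt a z) (rt x c) (rt y c) *
    lam r (rt x c) (rt y c) e f (lt (rt x c) u) (lt (rt x c) v)
      (rt (rt g c) e) (rt (rt h c) e) *
    lam r (lt a w) (lt a z) (lt (rt x c) u) (lt (rt x c) v)
      (lt a (lt c k)) (lt a (lt c l))
      (rt (lt a i) (lt (rt a i) e)) (rt (lt a j) (lt (rt a j) e))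

/-- `RBE(S,T)` for `T = [a,b]×[c,d]×[e,f] ⊇ S = [g,h]×[i,j]×[k,l]`. -/
noncomputable def RBE (r : Inc2 K X →ₗ[K] Inc2 K X) (lt rt : X → X → X)
    (a b c d e f g h i j k l : X) : K :=
  ∑ x ∈ Finset.Icc a g, ∑ y ∈ Finset.Icc h b, ∑ w ∈ Finset.Icc c i,
  ∑ z ∈ Finset.Icc j d, ∑ u ∈ Finset.Icc e k, ∑ v ∈ Finset.Icc l f,
    lam r c d e f (lt c u) (lt c v) (rt w e) (rt z e) *
    lam r a b (lt c u) (lt c v) (lt a (lt c k)) (lt a (lt c l))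
      (rt x (lt c u)) (rt y (lt c u)) *
    lam r (rt x (lt c u)) (rt y (lt c u)) (rt w e) (rt z e)
      (lt (rt a (lt i e)) (rt i e)) (lt (rt a (lt j e)) (rt j e))
      (rt (rt g c) e) (rt (rt h c) e)

/-- the height of `T = [a,b]×[c,d]×[e,f]`. -/
noncomputable def hgt3 (a b c d e f : X) : ℕ∞ := hgt a b + hgt c d + hgt e f

/-- `LSQ(S,T)` for `T = [a,b]×[c,d] ⊇ S = [e,f]×[g,h]`. -/
noncomputable def LSQ (r : Inc2 K X →ₗ[K] Inc2 K X) (lt rt : X → X → X)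
    (a b c d e f g h : X) : K :=
  ∑ x ∈ Finset.Icc a e, ∑ y ∈ Finset.Icc f b, ∑ w ∈ Finset.Icc c g, ∑ z ∈ Finset.Icc h d,
    lam r a b c d (lt a w) (lt a z) (rt x c) (rt y c) *
    lam r (lt a w) (lt a z) (rt x c) (rt y c)
      (lt (lt a w) (rt e c)) (lt (lt a w) (rt f c))
      (rt (lt a g) (rt x c)) (rt (lt a h) (rt x c))

/-- `RSQ(S,T)` for `T = [a,b]×[c,d] ⊇ S = [e,f]×[g,h]`. -/
def RSQ (K : Type) [Field K] (a b c d e f g h : X) : K :=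
  (if a = e then (1 : K) else 0) * (if b = f then 1 else 0) *
  (if c = g then 1 else 0) * (if d = h then 1 else 0)

/-- the height of `T = [a,b]×[c,d]`. -/
noncomputable def hgt2 (a b c d : X) : ℕ∞ := hgt a b + hgt c d

/-- `r` has set-type square. -/
def SetSq (r : Inc2 K X →ₗ[K] Inc2 K X) (lt rt : X → X → X) : Prop :=
  ∀ (a b c d : X) (hab : a ≤ b) (hcd : c ≤ d)
    (h1 : lt (lt a c) (rt a c) ≤ lt (lt a c) (rt b c))
    (h2 : rt (lt a c) (rt a c) ≤ rt (lt a d) (rt a c)),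
    r (r (single (⟨(a, b), hab⟩, ⟨(c, d), hcd⟩) 1))
      = single (⟨(lt (lt a c) (rt a c), lt (lt a c) (rt b c)), h1⟩,
                ⟨(rt (lt a c) (rt a c), rt (lt a d) (rt a c)), h2⟩) 1

/-- `r` has set-type square up to height 1. -/
def SetSq1 (r : Inc2 K X →ₗ[K] Inc2 K X) (lt rt : X → X → X) : Prop :=
  ∀ (a b c d : X) (hab : a ≤ b) (hcd : c ≤ d), hgt a b + hgt c d = 1 →
    ∀ (h1 : lt (lt a c) (rt a c) ≤ lt (lt a c) (rt b c))
      (h2 : rt (lt a c) (rt a c) ≤ rt (lt a d) (rt a c)),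
    r (r (single (⟨(a, b), hab⟩, ⟨(c, d), hcd⟩) 1))
      = single (⟨(lt (lt a c) (rt a c), lt (lt a c) (rt b c)), h1⟩,
                ⟨(rt (lt a c) (rt a c), rt (lt a d) (rt a c)), h2⟩) 1

/-- `α_r(c)(a,b)` (for translations given by poset automorphisms `φl`, `φr`). -/
noncomputable def alphaR (r : Inc2 K X →ₗ[K] Inc2 K X) (φl φr : X → X) (c a b : X) : K :=
  lam r a b c c (φl c) (φl c) (φr a) (φr b)

/-- `β_r(c)(a,b)`. -/
noncomputable def betaR (r : Inc2 K X →ₗ[K] Inc2 K X) (φl φr : X → X) (c a b : X) : K :=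
  lam r a b c c (φl c) (φl c) (φr a) (φr a)

/-- `α_l(c)(a,b)`. -/
noncomputable def alphaL (r : Inc2 K X →ₗ[K] Inc2 K X) (φl φr : X → X) (c a b : X) : K :=
  lam r c c a b (φl a) (φl b) (φr c) (φr c)

/-- `β_l(c)(a,b)`. -/
noncomputable def betaL (r : Inc2 K X →ₗ[K] Inc2 K X) (φl φr : X → X) (c a b : X) : K :=
  lam r c c a b (φl a) (φl a) (φr c) (φr c)

/-- `Γ_{a|b|c|d}`. -/
noncomputable def Gam (r : Inc2 K X →ₗ[K] Inc2 K X) (φl φr : X → X) (a b c d : X) : K :=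
  lam r a b c d (φl c) (φl c) (φr a) (φr a)

/-- `X` is connected. -/
def Connected (X : Type) [PartialOrder X] : Prop :=
  ∀ x y : X, Relation.ReflTransGen (fun a b : X => a ≤ b ∨ b ≤ a) x y


/-! ### The family of examples: `X = {a₀,…,a_{u−1}, b₀,…,b_{v−1}}` with `aᵢ < bⱼ` -/

/-- The underlying set of the height-one poset of the family of examples. -/
def Xf (u v : ℕ) : Type := Fin u ⊕ Fin v

instance (u v : ℕ) : DecidableEq (Xf u v) :=
  inferInstanceAs (DecidableEq (Fin u ⊕ Fin v))

instance (u v : ℕ) : Fintype (Xf u v) :=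
  inferInstanceAs (Fintype (Fin u ⊕ Fin v))

instance (u v : ℕ) : PartialOrder (Xf u v) where
  le x y := x = y ∨ (x.isLeft = true ∧ y.isRight = true)
  le_refl x := Or.inl rfl
  le_trans x y z hxy hyz := by
    rcases hxy with rfl | ⟨hx, hy⟩
    · exact hyz
    · rcases hyz with rfl | ⟨hy', hz⟩
      · exact Or.inr ⟨hx, hy⟩
      · cases y <;> simp_all
  le_antisymm x y hxy hyx := by
    rcases hxy with rfl | ⟨hx, hy⟩
    · rfl
    · rcases hyx with h | ⟨hy', hx'⟩
      · exact h.symm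
      · cases x <;> simp_all

instance (u v : ℕ) : @DecidableRel (Xf u v) (Xf u v) (· ≤ ·) := fun x y =>
  inferInstanceAs (Decidable (x = y ∨ (x.isLeft = true ∧ y.isRight = true)))

instance (u v : ℕ) : @DecidableRel (Xf u v) (Xf u v) (· < ·) := fun x y =>
  decidable_of_iff (x ≤ y ∧ ¬y ≤ x) lt_iff_le_not_ge.symm

instance (u v : ℕ) : LocallyFiniteOrder (Xf u v) := Fintype.toLocallyFiniteOrder

/-- The minimal elements `a_i`. -/
def Af {u v : ℕ} (i : Fin u) : Xf u v := Sum.inl i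

/-- The maximal elements `b_j`. -/
def Bf {u v : ℕ} (j : Fin v) : Xf u v := Sum.inr j

/-- The poset automorphism `φ_l` determined by `σ_a` and `σ_b`. -/
def phiL {u v : ℕ} (σa : Equiv.Perm (Fin u)) (σb : Equiv.Perm (Fin v)) :
    Xf u v → Xf u v := Sum.map σa σb

/-- The poset automorphism `φ_r` determined by `τ_a` and `τ_b`. -/
def phiR {u v : ℕ} (τa : Equiv.Perm (Fin u)) (τb : Equiv.Perm (Fin v)) :
    Xf u v → Xf u v := Sum.map τa τb

/-- A permutation of `Fin n` is an `n`-cycle (full cycle) iff it acts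
transitively. -/
def IsFullCycle {n : ℕ} (ς : Equiv.Perm (Fin n)) : Prop :=
  ∀ i j : Fin n, ∃ m : ℕ, (ς ^ m) i = j

/-- Every element of `K^×` has `n` distinct `n`-th roots. -/
def HasDistinctRoots (K : Type) [Field K] (n : ℕ) : Prop :=
  ∀ k : K, k ≠ 0 → ∃ S : Finset K, S.card = n ∧ ∀ x ∈ S, x ^ n = k

section Coefficients

variable {K X : Type} [Field K] [PartialOrder X] [@DecidableRel X X (· ≤ ·)]

theorem lam_eq_apply (r : Inc2 K X →ₗ[K] Inc2 K X) {a b c d e f g h : X}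
    (hab : a ≤ b) (hcd : c ≤ d) (hef : e ≤ f) (hgh : g ≤ h) :
    lam r a b c d e f g h
      = r (single (⟨(a, b), hab⟩, ⟨(c, d), hcd⟩) 1) (⟨(e, f), hef⟩, ⟨(g, h), hgh⟩) := by
  rw [lam, dif_pos hab, dif_pos hcd, dif_pos hef, dif_pos hgh]

theorem lam_eq_zero_of_not_le_left (r : Inc2 K X →ₗ[K] Inc2 K X) {a b c d e f g h : X}
    (hef : ¬e ≤ f) : lam r a b c d e f g h = 0 := by
  simp [lam, hef]

theorem lam_eq_zero_of_not_le_right (r : Inc2 K X →ₗ[K] Inc2 K X) {a b c d e f g h : X}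
    (hgh : ¬g ≤ h) : lam r a b c d e f g h = 0 := by
  simp [lam, hgh]

end Coefficients

/-- For `x ⩿ y`, these are the subintervals `[e, f]` of `[x, y]`. -/
def IsSubIcc {X : Type} (x y e f : X) : Prop :=
  e = x ∧ f = x ∨ e = x ∧ f = y ∨ e = y ∧ f = y

theorem IsSubIcc.of_right {X : Type} {x y z e f : X} (hz : z = x ∨ z = y)
    (h : IsSubIcc x z e f) : IsSubIcc x y e f := by
  unfold IsSubIcc at *; rcases hz with rfl | rfl <;> tauto

theorem IsSubIcc.of_left {X : Type} {x y z e f : X} (hz : z = x ∨ z = y)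
    (h : IsSubIcc z y e f) : IsSubIcc x y e f := by
  unfold IsSubIcc at *; rcases hz with rfl | rfl <;> tauto

section SubIntervals

variable {X : Type} [PartialOrder X] [DecidableEq X]

def subIccs (x y : X) (h : x ≤ y) : Finset (Y X) :=
  {⟨(x, x), le_rfl⟩, ⟨(x, y), h⟩, ⟨(y, y), le_rfl⟩}

theorem mem_subIccs {x y : X} {h : x ≤ y} {p : Y X} :
    p ∈ subIccs x y h ↔ IsSubIcc x y p.1.1 p.1.2 := by
  obtain ⟨⟨e, f⟩, hef⟩ := p
  simp [subIccs, IsSubIcc, Subtype.ext_iff]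

theorem subIccs_self (x : X) : subIccs x x le_rfl = {⟨(x, x), le_rfl⟩} := by
  simp [subIccs]

theorem sum_subIccs {M : Type} [AddCommMonoid M] {x y : X} (h : x ≤ y) (hxy : x ≠ y)
    (f : Y X → M) :
    ∑ p ∈ subIccs x y h, f p = f ⟨(x, x), le_rfl⟩ + f ⟨(x, y), h⟩ + f ⟨(y, y), le_rfl⟩ := by
  rw [subIccs, Finset.sum_insert (by simp [hxy]), Finset.sum_pair (by simp [hxy]), add_assoc]

end SubIntervals

section Coalgebra

variable {K X : Type} [Field K] [PartialOrder X] [DecidableEq X]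

theorem comul2_apply [LocallyFiniteOrder X] (w : Inc2 K X) {e₁ e₂ e₃ g₁ g₂ g₃ : X}
    (he₁ : e₁ ≤ e₂) (he₂ : e₂ ≤ e₃) (hg₁ : g₁ ≤ g₂) (hg₂ : g₂ ≤ g₃) :
    comul2 w ((⟨(e₁, e₂), he₁⟩, ⟨(g₁, g₂), hg₁⟩), (⟨(e₂, e₃), he₂⟩, ⟨(g₂, g₃), hg₂⟩))
      = w (⟨(e₁, e₃), he₁.trans he₂⟩, ⟨(g₁, g₃), hg₁.trans hg₂⟩) := by
  induction w using Finsupp.induction_linear with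
  | zero => simp
  | add w w' hw hw' => simp [hw, hw']
  | single pq c =>
    obtain ⟨⟨⟨a, b⟩, hab⟩, ⟨⟨c', d⟩, hcd⟩⟩ := pq
    simp only [comul2, Finsupp.lsum_single, LinearMap.toSpanSingleton_apply, Finsupp.smul_apply,
      Finset.sum_apply', Finsupp.single_apply, Prod.mk.injEq, Subtype.mk.injEq]
    by_cases h : (a = e₁ ∧ b = e₃) ∧ c' = g₁ ∧ d = g₃
    · obtain ⟨⟨rfl, rfl⟩, rfl, rfl⟩ := h
      rw [Finset.sum_eq_single_of_mem ⟨e₂, Finset.mem_Icc.2 ⟨he₁, he₂⟩⟩ (Finset.mem_attach _ _),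
        Finset.sum_eq_single_of_mem ⟨g₂, Finset.mem_Icc.2 ⟨hg₁, hg₂⟩⟩ (Finset.mem_attach _ _)]
      · simp
      · rintro y - hy
        exact if_neg fun H => hy (Subtype.ext H.1.2.2)
      · rintro x - hx
        exact Finset.sum_eq_zero fun y _ => if_neg fun H => hx (Subtype.ext H.1.1.2)
    · rw [if_neg h, Finset.sum_eq_zero]
      · simp
      intro x _
      refine Finset.sum_eq_zero fun y _ => if_neg ?_
      tauto

theorem tmap_single_apply (r s : Inc2 K X →ₗ[K] Inc2 K X) (p q P Q : Y X × Y X) (c : K) :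
    tmap r s (single (p, q) c) (P, Q) = c * (r (single p 1) P * s (single q 1) Q) := by
  simp only [tmap, Finsupp.lsum_single, LinearMap.toSpanSingleton_apply, Finsupp.smul_apply,
    smul_eq_mul, Finsupp.sum_apply, Finsupp.single_apply, Prod.mk.injEq,
    ← ite_zero_mul_ite_zero, ← Finsupp.mul_sum, ← Finsupp.sum_mul, Finsupp.sum_ite_self_eq']

theorem eps2_single (p : Y X × Y X) (k : K) :
    eps2 (single p k) = if p.1.1.1 = p.1.1.2 ∧ p.2.1.1 = p.2.1.2 then k else 0 := by
  rw [eps2, Finsupp.lsum_single]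
  split_ifs <;> simp

theorem eps2_r_single_eq_zero {r : Inc2 K X →ₗ[K] Inc2 K X} (heps : eps2 ∘ₗ r = eps2) {p q : Y X}
    (hpq : ¬(p.1.1 = p.1.2 ∧ q.1.1 = q.1.2)) : eps2 (r (single (p, q) 1)) = 0 := by
  rw [← LinearMap.comp_apply, heps, eps2_single, if_neg hpq]

end Coalgebra

section Intervals

variable {X : Type} [PartialOrder X] [LocallyFiniteOrder X]

theorem card_Icc_add_card_Icc_lt_of_lower {a b c d x y : X} (hx : x ∈ Finset.Icc a b)
    (hy : y ∈ Finset.Icc c d) (hxy : ¬(x = a ∧ y = c)) :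
    (Finset.Icc x b).card + (Finset.Icc y d).card
      < (Finset.Icc a b).card + (Finset.Icc c d).card := by
  rw [Finset.mem_Icc] at hx hy
  have hxb := Finset.card_le_card (Finset.Icc_subset_Icc_left (b := b) hx.1)
  have hyd := Finset.card_le_card (Finset.Icc_subset_Icc_left (b := d) hy.1)
  rcases not_and_or.1 hxy with hxa | hyc
  · have := Finset.card_lt_card
      (Finset.Icc_ssubset_Icc_left (hx.1.trans hx.2) (lt_of_le_of_ne hx.1 (Ne.symm hxa)) le_rfl)
    omega
  · have := Finset.card_lt_card
      (Finset.Icc_ssubset_Icc_left (hy.1.trans hy.2) (lt_of_le_of_ne hy.1 (Ne.symm hyc)) le_rfl)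
    omega

theorem card_Icc_add_card_Icc_lt_of_upper {a b c d x y : X} (hx : x ∈ Finset.Icc a b)
    (hy : y ∈ Finset.Icc c d) (hxy : ¬(x = b ∧ y = d)) :
    (Finset.Icc a x).card + (Finset.Icc c y).card
      < (Finset.Icc a b).card + (Finset.Icc c d).card := by
  rw [Finset.mem_Icc] at hx hy
  have hxb := Finset.card_le_card (Finset.Icc_subset_Icc_right (a := a) hx.2)
  have hyd := Finset.card_le_card (Finset.Icc_subset_Icc_right (a := c) hy.2)
  rcases not_and_or.1 hxy with hxa | hyc
  · have := Finset.card_lt_card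
      (Finset.Icc_ssubset_Icc_right (hx.1.trans hx.2) le_rfl (lt_of_le_of_ne hx.2 hxa))
    omega
  · have := Finset.card_lt_card
      (Finset.Icc_ssubset_Icc_right (hy.1.trans hy.2) le_rfl (lt_of_le_of_ne hy.2 hyc))
    omega

theorem _root_.WCovBy.finset_Icc_eq [DecidableEq X] {a b : X} (hab : a ⩿ b) :
    Finset.Icc a b = {a, b} := by
  ext x
  simp [hab.le_and_le_iff]

end Intervals

section Induced

variable {K X : Type} [Field K] [PartialOrder X] [DecidableEq X] [@DecidableRel X X (· ≤ ·)]
  {φl φr : X → X} {r : Inc2 K X →ₗ[K] Inc2 K X}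

theorem lam_self_self (hind : Induces r (fun _ y => φl y) (fun x _ => φr x)) (a c e f g h : X) :
    lam r a a c c e f g h = if e = φl c ∧ f = φl c ∧ g = φr a ∧ h = φr a then 1 else 0 := by
  by_cases hef : e ≤ f
  · by_cases hgh : g ≤ h
    · rw [lam_eq_apply r le_rfl le_rfl hef hgh, hind, Finsupp.single_apply]
      simp only [Prod.mk.injEq, Subtype.mk.injEq]
      exact if_congr (by tauto) rfl rfl
    · rw [lam_eq_zero_of_not_le_right r hgh, if_neg]
      rintro ⟨-, -, rfl, rfl⟩
      exact hgh le_rfl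
  · rw [lam_eq_zero_of_not_le_left r hef, if_neg]
    rintro ⟨rfl, rfl, -⟩
    exact hef le_rfl

variable [LocallyFiniteOrder X]

theorem lam_eq_sum_mul (r : Inc2 K X →ₗ[K] Inc2 K X) (hc : comul2 ∘ₗ r = tmap r r ∘ₗ comul2)
    {a b c d e₁ e₂ e₃ g₁ g₂ g₃ : X} (hab : a ≤ b) (hcd : c ≤ d)
    (he₁ : e₁ ≤ e₂) (he₂ : e₂ ≤ e₃) (hg₁ : g₁ ≤ g₂) (hg₂ : g₂ ≤ g₃) :
    lam r a b c d e₁ e₃ g₁ g₃ = ∑ x ∈ Finset.Icc a b, ∑ y ∈ Finset.Icc c d,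
      lam r a x c y e₁ e₂ g₁ g₂ * lam r x b y d e₂ e₃ g₂ g₃ := by
  rw [lam_eq_apply r hab hcd (he₁.trans he₂) (hg₁.trans hg₂), ← comul2_apply _ he₁ he₂ hg₁ hg₂,
    ← LinearMap.comp_apply, hc, LinearMap.comp_apply, comul2, Finsupp.lsum_single,
    LinearMap.toSpanSingleton_apply, one_smul, map_sum, Finset.sum_apply',
    ← Finset.sum_attach (Finset.Icc a b)]
  refine Finset.sum_congr rfl fun x _ => ?_
  rw [map_sum, Finset.sum_apply', ← Finset.sum_attach (Finset.Icc c d)]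
  refine Finset.sum_congr rfl fun y _ => ?_
  rw [tmap_single_apply, one_mul, ← lam_eq_apply, ← lam_eq_apply]

theorem lam_eq_zero_of_not_isSubIcc (hc : comul2 ∘ₗ r = tmap r r ∘ₗ comul2)
    (hind : Induces r (fun _ y => φl y) (fun x _ => φr x)) {a b c d : X} (hab : a ⩿ b)
    (hcd : c ⩿ d) {e f g h : X}
    (hS : ¬(IsSubIcc (φl c) (φl d) e f ∧ IsSubIcc (φr a) (φr b) g h)) :
    lam r a b c d e f g h = 0 := by
  -- Split `[e, f] ⊗ [g, h]` so that one corner term has a group-like factor ruling it out;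
  -- every other term has a factor on a strictly smaller rectangle.
  induction hn : (Finset.Icc a b).card + (Finset.Icc c d).card using Nat.strong_induction_on
    generalizing a b c d e f g h with
  | _ n ih =>
  by_cases hef : e ≤ f
  swap; · exact lam_eq_zero_of_not_le_left r hef
  by_cases hgh : g ≤ h
  swap; · exact lam_eq_zero_of_not_le_right r hgh
  have hsub : ∀ {x y}, x ∈ Finset.Icc a b → y ∈ Finset.Icc c d →
      (x = a ∨ x = b) ∧ (y = c ∨ y = d) := fun hx hy =>
    ⟨hab.eq_or_eq (Finset.mem_Icc.1 hx).1 (Finset.mem_Icc.1 hx).2,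
      hcd.eq_or_eq (Finset.mem_Icc.1 hy).1 (Finset.mem_Icc.1 hy).2⟩
  by_cases hfh : f = φl d ∧ h = φr b
  · rw [lam_eq_sum_mul r hc hab.le hcd.le le_rfl hef le_rfl hgh]
    refine Finset.sum_eq_zero fun x hx => Finset.sum_eq_zero fun y hy => ?_
    by_cases hxy : x = a ∧ y = c
    · obtain ⟨rfl, rfl⟩ := hxy
      rw [lam_self_self hind, if_neg, zero_mul]
      rintro ⟨rfl, -, rfl, -⟩
      exact hS ⟨Or.inr (Or.inl ⟨rfl, hfh.1⟩), Or.inr (Or.inl ⟨rfl, hfh.2⟩)⟩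
    · obtain ⟨hx', hy'⟩ := hsub hx hy
      refine mul_eq_zero_of_right _ (ih _ (hn ▸ card_Icc_add_card_Icc_lt_of_lower hx hy hxy)
        ?_ ?_ (fun H => hS ⟨H.1.of_left (hy'.imp (congrArg φl) (congrArg φl)),
          H.2.of_left (hx'.imp (congrArg φr) (congrArg φr))⟩) rfl)
      · rcases hx' with rfl | rfl; exacts [hab, WCovBy.refl _]
      · rcases hy' with rfl | rfl; exacts [hcd, WCovBy.refl _]
  · rw [lam_eq_sum_mul r hc hab.le hcd.le hef le_rfl hgh le_rfl]
    refine Finset.sum_eq_zero fun x hx => Finset.sum_eq_zero fun y hy => ?_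
    by_cases hxy : x = b ∧ y = d
    · obtain ⟨rfl, rfl⟩ := hxy
      rw [lam_self_self hind, if_neg, mul_zero]
      exact fun H => hfh ⟨H.1, H.2.2.1⟩
    · obtain ⟨hx', hy'⟩ := hsub hx hy
      refine mul_eq_zero_of_left (ih _ (hn ▸ card_Icc_add_card_Icc_lt_of_upper hx hy hxy)
        ?_ ?_ (fun H => hS ⟨H.1.of_right (hy'.imp (congrArg φl) (congrArg φl)),
          H.2.of_right (hx'.imp (congrArg φr) (congrArg φr))⟩) rfl) _
      · rcases hx' with rfl | rfl; exacts [WCovBy.refl _, hab]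
      · rcases hy' with rfl | rfl; exacts [WCovBy.refl _, hcd]

theorem r_single_eq_sum (hc : comul2 ∘ₗ r = tmap r r ∘ₗ comul2)
    (hind : Induces r (fun _ y => φl y) (fun x _ => φr x))
    {a b c d : X} (hab : a ⩿ b) (hcd : c ⩿ d) (hCD : φl c ≤ φl d) (hAB : φr a ≤ φr b) :
    r (single (⟨(a, b), hab.le⟩, ⟨(c, d), hcd.le⟩) 1)
      = ∑ p ∈ subIccs (φl c) (φl d) hCD, ∑ q ∈ subIccs (φr a) (φr b) hAB,
          lam r a b c d p.1.1 p.1.2 q.1.1 q.1.2 • single (p, q) 1 := by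
  set w := r (single (⟨(a, b), hab.le⟩, ⟨(c, d), hcd.le⟩) 1)
  have hsupp : w.support ⊆ subIccs (φl c) (φl d) hCD ×ˢ subIccs (φr a) (φr b) hAB := by
    rintro ⟨p, q⟩ hpq
    rw [Finset.mem_product, mem_subIccs, mem_subIccs]
    by_contra hS
    exact Finsupp.mem_support_iff.1 hpq ((lam_eq_apply r hab.le hcd.le p.2 q.2).symm.trans
      (lam_eq_zero_of_not_isSubIcc hc hind hab hcd hS))
  conv_lhs => rw [← Finsupp.sum_single w, Finsupp.sum_of_support_subset w hsupp _ (by simp),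
    Finset.sum_product]
  refine Finset.sum_congr rfl fun p _ => Finset.sum_congr rfl fun q _ => ?_
  rw [Finsupp.smul_single_one, lam_eq_apply r hab.le hcd.le p.2 q.2]

theorem r_single_covBy_self (hc : comul2 ∘ₗ r = tmap r r ∘ₗ comul2) (heps : eps2 ∘ₗ r = eps2)
    (hind : Induces r (fun _ y => φl y) (fun x _ => φr x)) (hφr : StrictMono φr)
    {a b : X} (hab : a ⋖ b) (c : X) :
    r (single (⟨(a, b), hab.le⟩, ⟨(c, c), le_rfl⟩) 1)
      = alphaR r φl φr c a b • single (⟨(φl c, φl c), le_rfl⟩, ⟨(φr a, φr b), (hφr hab.lt).le⟩) 1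
        + betaR r φl φr c a b • single (⟨(φl c, φl c), le_rfl⟩, ⟨(φr a, φr a), le_rfl⟩) 1
        - betaR r φl φr c a b • single (⟨(φl c, φl c), le_rfl⟩, ⟨(φr b, φr b), le_rfl⟩) 1 := by
  have hAB : φr a ≠ φr b := (hφr hab.lt).ne
  have h := r_single_eq_sum hc hind hab.wcovBy (WCovBy.refl c) le_rfl (hφr hab.lt).le
  rw [subIccs_self, Finset.sum_singleton, sum_subIccs _ hAB] at h
  have hε := eps2_r_single_eq_zero heps (p := ⟨(a, b), hab.le⟩) (q := ⟨(c, c), le_rfl⟩)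
    (by simp [hab.ne])
  simp only [h, map_add, map_smul, eps2_single, and_self, ↓reduceIte, hAB, and_false,
    smul_eq_mul, mul_one] at hε
  rw [h, alphaR, betaR, ← neg_eq_of_add_eq_zero_right hε]
  module

theorem lam_covBy_self (hc : comul2 ∘ₗ r = tmap r r ∘ₗ comul2) (heps : eps2 ∘ₗ r = eps2)
    (hind : Induces r (fun _ y => φl y) (fun x _ => φr x)) (hφr : StrictMono φr)
    {a b : X} (hab : a ⋖ b) (c e f g h : X) :
    lam r a b c c e f g h
      = (if e = φl c ∧ f = φl c ∧ g = φr a ∧ h = φr b then alphaR r φl φr c a b else 0)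
        + (if e = φl c ∧ f = φl c ∧ g = φr a ∧ h = φr a then betaR r φl φr c a b else 0)
        - (if e = φl c ∧ f = φl c ∧ g = φr b ∧ h = φr b then betaR r φl φr c a b else 0) := by
  by_cases hef : e ≤ f
  · by_cases hgh : g ≤ h
    · rw [lam_eq_apply r hab.le le_rfl hef hgh, r_single_covBy_self hc heps hind hφr hab]
      simp [Finsupp.single_apply, eq_comm, and_assoc]
    · rw [lam_eq_zero_of_not_le_right r hgh, if_neg, if_neg, if_neg, add_zero, sub_zero]
      all_goals rintro ⟨-, -, rfl, rfl⟩
      exacts [hgh le_rfl, hgh le_rfl, hgh (hφr hab.lt).le]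
  · rw [lam_eq_zero_of_not_le_left r hef, if_neg, if_neg, if_neg, add_zero, sub_zero]
    all_goals rintro ⟨rfl, rfl, -⟩
    all_goals exact hef le_rfl

theorem r_single_self_covBy (hc : comul2 ∘ₗ r = tmap r r ∘ₗ comul2) (heps : eps2 ∘ₗ r = eps2)
    (hind : Induces r (fun _ y => φl y) (fun x _ => φr x)) (hφl : StrictMono φl)
    (c : X) {a b : X} (hab : a ⋖ b) :
    r (single (⟨(c, c), le_rfl⟩, ⟨(a, b), hab.le⟩) 1)
      = alphaL r φl φr c a b • single (⟨(φl a, φl b), (hφl hab.lt).le⟩, ⟨(φr c, φr c), le_rfl⟩) 1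
        + betaL r φl φr c a b • single (⟨(φl a, φl a), le_rfl⟩, ⟨(φr c, φr c), le_rfl⟩) 1
        - betaL r φl φr c a b • single (⟨(φl b, φl b), le_rfl⟩, ⟨(φr c, φr c), le_rfl⟩) 1 := by
  have hAB : φl a ≠ φl b := (hφl hab.lt).ne
  have h := r_single_eq_sum hc hind (WCovBy.refl c) hab.wcovBy (hφl hab.lt).le le_rfl
  rw [subIccs_self] at h
  simp only [Finset.sum_singleton, sum_subIccs _ hAB] at h
  have hε := eps2_r_single_eq_zero heps (p := ⟨(c, c), le_rfl⟩) (q := ⟨(a, b), hab.le⟩)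
    (by simp [hab.ne])
  simp only [h, map_add, map_smul, eps2_single, and_self, ↓reduceIte, hAB, and_true,
    smul_eq_mul, mul_one] at hε
  rw [h, alphaL, betaL, ← neg_eq_of_add_eq_zero_right hε]
  module

theorem lam_self_covBy (hc : comul2 ∘ₗ r = tmap r r ∘ₗ comul2) (heps : eps2 ∘ₗ r = eps2)
    (hind : Induces r (fun _ y => φl y) (fun x _ => φr x)) (hφl : StrictMono φl)
    (c : X) {a b : X} (hab : a ⋖ b) (e f g h : X) :
    lam r c c a b e f g h
      = (if e = φl a ∧ f = φl b ∧ g = φr c ∧ h = φr c then alphaL r φl φr c a b else 0)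
        + (if e = φl a ∧ f = φl a ∧ g = φr c ∧ h = φr c then betaL r φl φr c a b else 0)
        - (if e = φl b ∧ f = φl b ∧ g = φr c ∧ h = φr c then betaL r φl φr c a b else 0) := by
  by_cases hgh : g ≤ h
  · by_cases hef : e ≤ f
    · rw [lam_eq_apply r le_rfl hab.le hef hgh, r_single_self_covBy hc heps hind hφl c hab]
      simp [Finsupp.single_apply, eq_comm, and_assoc]
    · rw [lam_eq_zero_of_not_le_left r hef, if_neg, if_neg, if_neg, add_zero, sub_zero]
      all_goals rintro ⟨rfl, rfl, -⟩
      exacts [hef le_rfl, hef le_rfl, hef (hφl hab.lt).le]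
  · rw [lam_eq_zero_of_not_le_right r hgh, if_neg, if_neg, if_neg, add_zero, sub_zero]
    all_goals rintro ⟨-, -, rfl, rfl⟩
    all_goals exact hgh le_rfl

theorem r_single_covBy_covBy (hc : comul2 ∘ₗ r = tmap r r ∘ₗ comul2) (heps : eps2 ∘ₗ r = eps2)
    (hind : Induces r (fun _ y => φl y) (fun x _ => φr x)) (hφl : StrictMono φl)
    (hφr : StrictMono φr) {a b c d : X} (hab : a ⋖ b) (hcd : c ⋖ d) :
    r (single (⟨(a, b), hab.le⟩, ⟨(c, d), hcd.le⟩) 1)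
      = (alphaR r φl φr c a b * alphaL r φl φr b c d) •
          single (⟨(φl c, φl d), (hφl hcd.lt).le⟩, ⟨(φr a, φr b), (hφr hab.lt).le⟩) 1
        + (alphaL r φl φr a c d * betaR r φl φr d a b) •
          single (⟨(φl c, φl d), (hφl hcd.lt).le⟩, ⟨(φr a, φr a), le_rfl⟩) 1
        - (betaR r φl φr c a b * alphaL r φl φr b c d) •
          single (⟨(φl c, φl d), (hφl hcd.lt).le⟩, ⟨(φr b, φr b), le_rfl⟩) 1
        + (alphaR r φl φr c a b * betaL r φl φr b c d) •
          single (⟨(φl c, φl c), le_rfl⟩, ⟨(φr a, φr b), (hφr hab.lt).le⟩) 1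
        - (betaL r φl φr a c d * alphaR r φl φr d a b) •
          single (⟨(φl d, φl d), le_rfl⟩, ⟨(φr a, φr b), (hφr hab.lt).le⟩) 1
        + Gam r φl φr a b c d •
          single (⟨(φl c, φl c), le_rfl⟩, ⟨(φr a, φr a), le_rfl⟩) 1
        - (betaR r φl φr c a b * betaL r φl φr b c d) •
          single (⟨(φl c, φl c), le_rfl⟩, ⟨(φr b, φr b), le_rfl⟩) 1
        - (betaL r φl φr a c d * betaR r φl φr d a b) •
          single (⟨(φl d, φl d), le_rfl⟩, ⟨(φr a, φr a), le_rfl⟩) 1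
        + (betaR r φl φr c a b * betaL r φl φr b c d + betaL r φl φr a c d * betaR r φl φr d a b
            - Gam r φl φr a b c d) •
          single (⟨(φl d, φl d), le_rfl⟩, ⟨(φr b, φr b), le_rfl⟩) 1 := by
  have hAB : φr a ≠ φr b := (hφr hab.lt).ne
  have hCD : φl c ≠ φl d := (hφl hcd.lt).ne
  have hCD' := (hφl hcd.lt).le
  have hAB' := (hφr hab.lt).le
  have hmul : ∀ {e₁ e₂ e₃ g₁ g₂ g₃ : X}, e₁ ≤ e₂ → e₂ ≤ e₃ → g₁ ≤ g₂ → g₂ ≤ g₃ →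
      lam r a b c d e₁ e₃ g₁ g₃
        = lam r a a c c e₁ e₂ g₁ g₂ * lam r a b c d e₂ e₃ g₂ g₃
          + lam r a a c d e₁ e₂ g₁ g₂ * lam r a b d d e₂ e₃ g₂ g₃
          + (lam r a b c c e₁ e₂ g₁ g₂ * lam r b b c d e₂ e₃ g₂ g₃
          + lam r a b c d e₁ e₂ g₁ g₂ * lam r b b d d e₂ e₃ g₂ g₃) := by
    intro e₁ e₂ e₃ g₁ g₂ g₃ he₁ he₂ hg₁ hg₂
    rw [lam_eq_sum_mul r hc hab.le hcd.le he₁ he₂ hg₁ hg₂,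
      hab.wcovBy.finset_Icc_eq, hcd.wcovBy.finset_Icc_eq,
      Finset.sum_pair hab.ne, Finset.sum_pair hcd.ne, Finset.sum_pair hcd.ne]
  simp only [lam_self_self hind, lam_covBy_self hc heps hind hφr hab,
    lam_self_covBy hc heps hind hφl _ hcd] at hmul
  -- In each instance of `hmul` below three of the four terms vanish; the coefficient at
  -- `[φl d, φl d] ⊗ [φr b, φr b]` comes from the counit instead.
  have v₁ : lam r a b c d (φl c) (φl d) (φr a) (φr b)
      = alphaR r φl φr c a b * alphaL r φl φr b c d := by
    simpa [hAB, hCD, hAB.symm, hCD.symm] using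
      hmul (e₂ := φl c) (g₂ := φr b) le_rfl hCD' hAB' le_rfl
  have v₂ : lam r a b c d (φl c) (φl d) (φr a) (φr a)
      = alphaL r φl φr a c d * betaR r φl φr d a b := by
    simpa [hAB, hCD, hAB.symm, hCD.symm] using
      hmul (e₂ := φl d) (g₂ := φr a) (g₃ := φr a) hCD' le_rfl le_rfl le_rfl
  have v₃ : lam r a b c d (φl c) (φl d) (φr b) (φr b)
      = -(betaR r φl φr c a b * alphaL r φl φr b c d) := by
    simpa [hAB, hCD, hAB.symm, hCD.symm] using
      hmul (e₂ := φl c) (g₁ := φr b) (g₂ := φr b) (g₃ := φr b) le_rfl hCD' le_rfl le_rfl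
  have v₄ : lam r a b c d (φl c) (φl c) (φr a) (φr b)
      = alphaR r φl φr c a b * betaL r φl φr b c d := by
    simpa [hAB, hCD, hAB.symm, hCD.symm] using
      hmul (e₂ := φl c) (e₃ := φl c) (g₂ := φr b) le_rfl le_rfl hAB' le_rfl
  have v₅ : lam r a b c d (φl d) (φl d) (φr a) (φr b)
      = -(betaL r φl φr a c d * alphaR r φl φr d a b) := by
    simpa [hAB, hCD, hAB.symm, hCD.symm] using
      hmul (e₁ := φl d) (e₂ := φl d) (e₃ := φl d) (g₂ := φr a) le_rfl le_rfl le_rfl hAB'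
  have v₇ : lam r a b c d (φl c) (φl c) (φr b) (φr b)
      = -(betaR r φl φr c a b * betaL r φl φr b c d) := by
    simpa [hAB, hCD, hAB.symm, hCD.symm] using hmul (e₁ := φl c) (e₂ := φl c) (e₃ := φl c)
      (g₁ := φr b) (g₂ := φr b) (g₃ := φr b) le_rfl le_rfl le_rfl le_rfl
  have v₈ : lam r a b c d (φl d) (φl d) (φr a) (φr a)
      = -(betaL r φl φr a c d * betaR r φl φr d a b) := by
    simpa [hAB, hCD, hAB.symm, hCD.symm] using hmul (e₁ := φl d) (e₂ := φl d) (e₃ := φl d)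
      (g₁ := φr a) (g₂ := φr a) (g₃ := φr a) le_rfl le_rfl le_rfl le_rfl
  have h := r_single_eq_sum hc hind hab.wcovBy hcd.wcovBy hCD' hAB'
  simp only [sum_subIccs _ hCD, sum_subIccs _ hAB] at h
  have hε := eps2_r_single_eq_zero heps (p := ⟨(a, b), hab.le⟩) (q := ⟨(c, d), hcd.le⟩)
    (by simp [hab.ne])
  simp only [h, map_add, map_smul, eps2_single, and_self, ↓reduceIte, hAB, hCD, and_false,
    and_true, smul_eq_mul, mul_one] at hε
  have v₉ : lam r a b c d (φl d) (φl d) (φr b) (φr b) = betaR r φl φr c a b * betaL r φl φr b c d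
      + betaL r φl φr a c d * betaR r φl φr d a b - Gam r φl φr a b c d := by
    rw [Gam]; linear_combination hε - v₇ - v₈
  rw [h, v₁, v₂, v₃, v₄, v₅, v₇, v₈, v₉, Gam]
  module

end Induced

section Tensor

variable {K X : Type} [Field K] [PartialOrder X]

theorem r12_single (r : Inc2 K X →ₗ[K] Inc2 K X) (p q s : Y X) (c : K) :
    r12 r (single (p, q, s) c)
      = c • mapDomain (fun t : Y X × Y X => (t.1, t.2, s)) (r (single (p, q) 1)) := by
  rw [← Finsupp.smul_single_one, map_smul, r12, Finsupp.lsum_single,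
    LinearMap.toSpanSingleton_apply, one_smul]
  rfl

theorem r23_single (r : Inc2 K X →ₗ[K] Inc2 K X) (p q s : Y X) (c : K) :
    r23 r (single (p, q, s) c)
      = c • mapDomain (fun t : Y X × Y X => (p, t)) (r (single (q, s) 1)) := by
  rw [← Finsupp.smul_single_one, map_smul, r23, Finsupp.lsum_single,
    LinearMap.toSpanSingleton_apply, one_smul]
  rfl

end Tensor

theorem _root_.Equiv.Perm.apply_apply_of_commute {α : Type*} {σ τ : Equiv.Perm α}
    (h : Commute σ τ) (x : α) : τ (σ x) = σ (τ x) := by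
  rw [← Equiv.Perm.mul_apply, ← Equiv.Perm.mul_apply, h.symm.eq]

section Family

variable {u v : ℕ}

@[simp] theorem Af_inj {i k : Fin u} : (Af i : Xf u v) = Af k ↔ i = k := Sum.inl_injective.eq_iff

@[simp] theorem Bf_inj {j l : Fin v} : (Bf j : Xf u v) = Bf l ↔ j = l := Sum.inr_injective.eq_iff

@[simp] theorem Af_ne_Bf {i : Fin u} {j : Fin v} : (Af i : Xf u v) ≠ Bf j := Sum.inl_ne_inr

@[simp] theorem Bf_ne_Af {i : Fin u} {j : Fin v} : (Bf j : Xf u v) ≠ Af i := Sum.inr_ne_inl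

theorem Xf.cases (x : Xf u v) : (∃ i, x = Af i) ∨ ∃ j, x = Bf j := by
  rcases x with i | j
  exacts [Or.inl ⟨i, rfl⟩, Or.inr ⟨j, rfl⟩]

theorem Xf.le_def {x y : Xf u v} : x ≤ y ↔ x = y ∨ x.isLeft ∧ y.isRight := Iff.rfl

@[simp] theorem Af_le_Af {i k : Fin u} : (Af i : Xf u v) ≤ Af k ↔ i = k := by
  rw [Xf.le_def, Af_inj]
  simp [Af]

@[simp] theorem Bf_le_Bf {j l : Fin v} : (Bf j : Xf u v) ≤ Bf l ↔ j = l := by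
  rw [Xf.le_def, Bf_inj]
  simp [Bf]

@[simp] theorem Bf_not_le_Af {i : Fin u} {j : Fin v} : ¬(Bf j : Xf u v) ≤ Af i := by
  rw [Xf.le_def, eq_false Bf_ne_Af, false_or]
  simp [Af, Bf]

theorem Af_le_Bf (i : Fin u) (j : Fin v) : (Af i : Xf u v) ≤ Bf j := Or.inr ⟨rfl, rfl⟩

theorem Xf.lt_iff {x y : Xf u v} : x < y ↔ ∃ i j, x = Af i ∧ y = Bf j := by
  rcases x.cases with ⟨i, rfl⟩ | ⟨j, rfl⟩ <;> rcases y.cases with ⟨k, rfl⟩ | ⟨l, rfl⟩ <;>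
    simp [lt_iff_le_not_ge, Af_le_Bf, eq_comm]

theorem Af_covBy_Bf (i : Fin u) (j : Fin v) : (Af i : Xf u v) ⋖ Bf j := by
  refine ⟨Xf.lt_iff.2 ⟨i, j, rfl, rfl⟩, fun x hx hxj => ?_⟩
  obtain ⟨-, j', -, rfl⟩ := Xf.lt_iff.1 hx
  obtain ⟨i', -, h, -⟩ := Xf.lt_iff.1 hxj
  exact Bf_ne_Af h

theorem phiL_strictMono (σa : Equiv.Perm (Fin u)) (σb : Equiv.Perm (Fin v)) :
    StrictMono (phiL σa σb) := by
  intro x y hxy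
  obtain ⟨i, j, rfl, rfl⟩ := Xf.lt_iff.1 hxy
  exact Xf.lt_iff.2 ⟨σa i, σb j, rfl, rfl⟩

theorem phiR_strictMono (τa : Equiv.Perm (Fin u)) (τb : Equiv.Perm (Fin v)) :
    StrictMono (phiR τa τb) :=
  phiL_strictMono τa τb

@[simp] theorem phiL_Af {σa : Equiv.Perm (Fin u)} {σb : Equiv.Perm (Fin v)} (i : Fin u) :
    phiL σa σb (Af i) = Af (σa i) := rfl

@[simp] theorem phiL_Bf {σa : Equiv.Perm (Fin u)} {σb : Equiv.Perm (Fin v)} (j : Fin v) :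
    phiL σa σb (Bf j) = Bf (σb j) := rfl

@[simp] theorem phiR_Af {τa : Equiv.Perm (Fin u)} {τb : Equiv.Perm (Fin v)} (i : Fin u) :
    phiR τa τb (Af i) = Af (τa i) := rfl

@[simp] theorem phiR_Bf {τa : Equiv.Perm (Fin u)} {τb : Equiv.Perm (Fin v)} (j : Fin v) :
    phiR τa τb (Bf j) = Bf (τb j) := rfl

abbrev yA (i : Fin u) : Y (Xf u v) := ⟨(Af i, Af i), le_rfl⟩

abbrev yB (j : Fin v) : Y (Xf u v) := ⟨(Bf j, Bf j), le_rfl⟩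

abbrev yC (i : Fin u) (j : Fin v) : Y (Xf u v) := ⟨(Af i, Bf j), Af_le_Bf i j⟩

theorem Y.cases_Xf (p : Y (Xf u v)) :
    (∃ i, p = yA i) ∨ (∃ j, p = yB j) ∨ ∃ i j, p = yC i j := by
  obtain ⟨⟨x, y⟩, h⟩ := p
  rcases x.cases with ⟨i, rfl⟩ | ⟨j, rfl⟩ <;> rcases y.cases with ⟨k, rfl⟩ | ⟨l, rfl⟩
  · obtain rfl := Af_le_Af.1 h
    exact Or.inl ⟨i, rfl⟩
  · exact Or.inr (Or.inr ⟨i, l, rfl⟩)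
  · exact absurd h Bf_not_le_Af
  · obtain rfl := Bf_le_Bf.1 h
    exact Or.inr (Or.inl ⟨j, rfl⟩)

end Family

section Braid

variable {K : Type} [Field K] {u v : ℕ} {σa τa : Equiv.Perm (Fin u)} {σb τb : Equiv.Perm (Fin v)}
  {r : Inc2 K (Xf u v) →ₗ[K] Inc2 K (Xf u v)} {βa βb Γ : K}

/-- The constant parameters of the family in the case `α = ε = 1`. -/
structure UnitConstantParams (r : Inc2 K (Xf u v) →ₗ[K] Inc2 K (Xf u v))
    (σa τa : Equiv.Perm (Fin u)) (σb τb : Equiv.Perm (Fin v)) (βa βb Γ : K) : Prop where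
  alphaL_A : ∀ i k l, alphaL r (phiL σa σb) (phiR τa τb) (Af i) (Af k) (Bf l) = 1
  alphaL_B : ∀ j k l, alphaL r (phiL σa σb) (phiR τa τb) (Bf j) (Af k) (Bf l) = 1
  alphaR_A : ∀ i k l, alphaR r (phiL σa σb) (phiR τa τb) (Af i) (Af k) (Bf l) = 1
  alphaR_B : ∀ j k l, alphaR r (phiL σa σb) (phiR τa τb) (Bf j) (Af k) (Bf l) = 1
  betaL_A : ∀ i k l, betaL r (phiL σa σb) (phiR τa τb) (Af i) (Af k) (Bf l) = βa
  betaL_B : ∀ j k l, betaL r (phiL σa σb) (phiR τa τb) (Bf j) (Af k) (Bf l) = βb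
  betaR_A : ∀ i k l, betaR r (phiL σa σb) (phiR τa τb) (Af i) (Af k) (Bf l) = -βa
  betaR_B : ∀ j k l, betaR r (phiL σa σb) (phiR τa τb) (Bf j) (Af k) (Bf l) = -βb
  gam : ∀ i j k l, Gam r (phiL σa σb) (phiR τa τb) (Af i) (Bf j) (Af k) (Bf l) = Γ

theorem r_yA_yA (hind : Induces r (fun _ y => phiL σa σb y) (fun x _ => phiR τa τb x))
    (i k : Fin u) : r (single (yA i, yA k) 1) = single (yA (σa k), yA (τa i)) 1 :=
  hind (Af i) (Af k)

theorem r_yA_yB (hind : Induces r (fun _ y => phiL σa σb y) (fun x _ => phiR τa τb x))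
    (i : Fin u) (j : Fin v) : r (single (yA i, yB j) 1) = single (yB (σb j), yA (τa i)) 1 :=
  hind (Af i) (Bf j)

theorem r_yB_yA (hind : Induces r (fun _ y => phiL σa σb y) (fun x _ => phiR τa τb x))
    (j : Fin v) (k : Fin u) : r (single (yB j, yA k) 1) = single (yA (σa k), yB (τb j)) 1 :=
  hind (Bf j) (Af k)

theorem r_yB_yB (hind : Induces r (fun _ y => phiL σa σb y) (fun x _ => phiR τa τb x))
    (j l : Fin v) : r (single (yB j, yB l) 1) = single (yB (σb l), yB (τb j)) 1 :=
  hind (Bf j) (Bf l)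

variable (hc : comul2 ∘ₗ r = tmap r r ∘ₗ comul2) (heps : eps2 ∘ₗ r = eps2)
  (hind : Induces r (fun _ y => phiL σa σb y) (fun x _ => phiR τa τb x))
  (hp : UnitConstantParams r σa τa σb τb βa βb Γ)
include hc heps hind hp

theorem r_yC_yA (k : Fin u) (l : Fin v) (i : Fin u) :
    r (single (yC k l, yA i) 1)
      = single (yA (σa i), yC (τa k) (τb l)) 1 - βa • single (yA (σa i), yA (τa k)) 1
        + βa • single (yA (σa i), yB (τb l)) 1 := by
  rw [r_single_covBy_self hc heps hind (phiR_strictMono τa τb) (Af_covBy_Bf k l) (Af i),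
    hp.alphaR_A, hp.betaR_A]
  simp only [phiL_Af, phiR_Af, phiR_Bf]
  module

theorem r_yC_yB (k : Fin u) (l : Fin v) (j : Fin v) :
    r (single (yC k l, yB j) 1)
      = single (yB (σb j), yC (τa k) (τb l)) 1 - βb • single (yB (σb j), yA (τa k)) 1
        + βb • single (yB (σb j), yB (τb l)) 1 := by
  rw [r_single_covBy_self hc heps hind (phiR_strictMono τa τb) (Af_covBy_Bf k l) (Bf j),
    hp.alphaR_B, hp.betaR_B]
  simp only [phiL_Bf, phiR_Af, phiR_Bf]
  module

theorem r_yA_yC (i k : Fin u) (l : Fin v) :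
    r (single (yA i, yC k l) 1)
      = single (yC (σa k) (σb l), yA (τa i)) 1 + βa • single (yA (σa k), yA (τa i)) 1
        - βa • single (yB (σb l), yA (τa i)) 1 := by
  rw [r_single_self_covBy hc heps hind (phiL_strictMono σa σb) (Af i) (Af_covBy_Bf k l),
    hp.alphaL_A, hp.betaL_A]
  simp only [phiL_Af, phiL_Bf, phiR_Af]
  module

theorem r_yB_yC (j : Fin v) (k : Fin u) (l : Fin v) :
    r (single (yB j, yC k l) 1)
      = single (yC (σa k) (σb l), yB (τb j)) 1 + βb • single (yA (σa k), yB (τb j)) 1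
        - βb • single (yB (σb l), yB (τb j)) 1 := by
  rw [r_single_self_covBy hc heps hind (phiL_strictMono σa σb) (Bf j) (Af_covBy_Bf k l),
    hp.alphaL_B, hp.betaL_B]
  simp only [phiL_Af, phiL_Bf, phiR_Bf]
  module

theorem r_yC_yC (i : Fin u) (j : Fin v) (k : Fin u) (l : Fin v) :
    r (single (yC i j, yC k l) 1)
      = single (yC (σa k) (σb l), yC (τa i) (τb j)) 1
        - βb • single (yC (σa k) (σb l), yA (τa i)) 1
        + βa • single (yC (σa k) (σb l), yB (τb j)) 1
        + βb • single (yA (σa k), yC (τa i) (τb j)) 1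
        - βa • single (yB (σb l), yC (τa i) (τb j)) 1
        + Γ • single (yA (σa k), yA (τa i)) 1
        + (βa * βb) • single (yA (σa k), yB (τb j)) 1
        + (βa * βb) • single (yB (σb l), yA (τa i)) 1
        - (Γ + 2 * βa * βb) • single (yB (σb l), yB (τb j)) 1 := by
  rw [r_single_covBy_covBy hc heps hind (phiL_strictMono σa σb) (phiR_strictMono τa τb)
    (Af_covBy_Bf i j) (Af_covBy_Bf k l), hp.alphaR_A, hp.alphaR_B, hp.alphaL_A, hp.alphaL_B,
    hp.betaR_A, hp.betaR_B, hp.betaL_A, hp.betaL_B, hp.gam]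
  simp only [phiL_Af, phiL_Bf, phiR_Af, phiR_Bf]
  module

variable (hσ : Commute σa τa) (hτ : Commute σb τb)
include hσ hτ

theorem braid_yC_yC_yC (i : Fin u) (j : Fin v) (k : Fin u) (l : Fin v) (m : Fin u) (n : Fin v) :
    (r12 r ∘ₗ r23 r ∘ₗ r12 r) (single (yC i j, yC k l, yC m n) 1)
      = (r23 r ∘ₗ r12 r ∘ₗ r23 r) (single (yC i j, yC k l, yC m n) 1)
        + ((βa - βb) * (2 * Γ + 2 * βb * βa)) •
          (single (yA (σa (σa m)), yA (σa (τa k)), yA (τa (τa i))) 1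
            - single (yB (σb (σb n)), yB (σb (τb l)), yB (τb (τb j))) 1) := by
  simp only [LinearMap.comp_apply, r12_single, r23_single, map_add, map_sub, map_smul,
    Finsupp.mapDomain_add, Finsupp.mapDomain_sub, Finsupp.mapDomain_smul, Finsupp.mapDomain_single,
    r_yA_yA hind, r_yA_yB hind, r_yB_yA hind, r_yB_yB hind, r_yC_yA hc heps hind hp,
    r_yC_yB hc heps hind hp, r_yA_yC hc heps hind hp, r_yB_yC hc heps hind hp,
    r_yC_yC hc heps hind hp, Equiv.Perm.apply_apply_of_commute hσ,
    Equiv.Perm.apply_apply_of_commute hτ, one_smul]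
  match_scalars <;> ring

set_option maxHeartbeats 1000000 in
theorem braidEqR_of_sub_mul_eq_zero (hD : (βa - βb) * (2 * Γ + 2 * βb * βa) = 0) : BraidEqR r := by
  refine Finsupp.lhom_ext fun t c => ?_
  obtain ⟨p, q, s⟩ := t
  rw [← Finsupp.smul_single_one, map_smul, map_smul]
  congr 1
  rcases p.cases_Xf with ⟨i, rfl⟩ | ⟨j, rfl⟩ | ⟨i, j, rfl⟩ <;>
    rcases q.cases_Xf with ⟨k, rfl⟩ | ⟨l, rfl⟩ | ⟨k, l, rfl⟩ <;>
    rcases s.cases_Xf with ⟨m, rfl⟩ | ⟨n, rfl⟩ | ⟨m, n, rfl⟩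
  all_goals first
    | rw [braid_yC_yC_yC hc heps hind hp hσ hτ, hD, zero_smul, add_zero]
    | simp only [LinearMap.comp_apply, r12_single, r23_single, map_add, map_sub, map_smul,
        Finsupp.mapDomain_add, Finsupp.mapDomain_sub, Finsupp.mapDomain_smul,
        Finsupp.mapDomain_single, r_yA_yA hind, r_yA_yB hind, r_yB_yA hind, r_yB_yB hind,
        r_yC_yA hc heps hind hp, r_yC_yB hc heps hind hp, r_yA_yC hc heps hind hp,
        r_yB_yC hc heps hind hp, r_yC_yC hc heps hind hp,
        Equiv.Perm.apply_apply_of_commute hσ, Equiv.Perm.apply_apply_of_commute hτ, one_smul]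
      try (match_scalars <;> ring)

theorem sub_mul_eq_zero_of_braidEqR (hu : 0 < u) (hv : 0 < v) (hb : BraidEqR r) :
    (βa - βb) * (2 * Γ + 2 * βb * βa) = 0 := by
  have h := braid_yC_yC_yC hc heps hind hp hσ hτ ⟨0, hu⟩ ⟨0, hv⟩ ⟨0, hu⟩ ⟨0, hv⟩ ⟨0, hu⟩ ⟨0, hv⟩
  rw [hb, left_eq_add, smul_eq_zero] at h
  refine h.resolve_right fun h' => ?_
  have := DFunLike.congr_fun h' (yA (σa (σa ⟨0, hu⟩)), yA (σa (τa ⟨0, hu⟩)), yA (τa (τa ⟨0, hu⟩)))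
  simp at this

theorem braidEqR_iff_sub_mul_eq_zero (hu : 0 < u) (hv : 0 < v) :
    BraidEqR r ↔ (βa - βb) * (2 * Γ + 2 * βb * βa) = 0 :=
  ⟨sub_mul_eq_zero_of_braidEqR hc heps hind hp hσ hτ hu hv,
    braidEqR_of_sub_mul_eq_zero hc heps hind hp hσ hτ⟩

end Braid

theorem statement15_general {K : Type} [Field K] (u v : ℕ) (hu : 0 < u) (hv : 0 < v)
    (σa τa : Equiv.Perm (Fin u)) (σb τb : Equiv.Perm (Fin v))
    (hcomma : Commute σa τa) (hcommb : Commute σb τb)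
    (r : Inc2 K (Xf u v) →ₗ[K] Inc2 K (Xf u v))
    (hca : IsCoalgAuto r)
    (hind : Induces r (fun _ y => phiL σa σb y) (fun x _ => phiR τa τb x))
    (α βa βb ε Γ : K)
    (hαla : ∀ (i k : Fin u) (l : Fin v),
      alphaL r (phiL σa σb) (phiR τa τb) (Af i) (Af k) (Bf l) = α)
    (hαlb : ∀ (j : Fin v) (k : Fin u) (l : Fin v),
      alphaL r (phiL σa σb) (phiR τa τb) (Bf j) (Af k) (Bf l) = ε * α)
    (hαra : ∀ (i k : Fin u) (l : Fin v),
      alphaR r (phiL σa σb) (phiR τa τb) (Af i) (Af k) (Bf l) = 1 / α)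
    (hαrb : ∀ (j : Fin v) (k : Fin u) (l : Fin v),
      alphaR r (phiL σa σb) (phiR τa τb) (Bf j) (Af k) (Bf l) = ε / α)
    (hβla : ∀ (i k : Fin u) (l : Fin v),
      betaL r (phiL σa σb) (phiR τa τb) (Af i) (Af k) (Bf l) = βa)
    (hβlb : ∀ (j : Fin v) (k : Fin u) (l : Fin v),
      betaL r (phiL σa σb) (phiR τa τb) (Bf j) (Af k) (Bf l) = βb)
    (hβra : ∀ (i k : Fin u) (l : Fin v),
      betaR r (phiL σa σb) (phiR τa τb) (Af i) (Af k) (Bf l) = -βa / α)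
    (hβrb : ∀ (j : Fin v) (k : Fin u) (l : Fin v),
      betaR r (phiL σa σb) (phiR τa τb) (Bf j) (Af k) (Bf l) = -(ε * βb) / α)
    (hΓ : ∀ (i : Fin u) (j : Fin v) (k : Fin u) (l : Fin v),
      Gam r (phiL σa σb) (phiR τa τb) (Af i) (Bf j) (Af k) (Bf l) = Γ)
    (hε1 : ε = 1) (hα1 : α = 1)
    : BraidEqR r ↔ (βa = βb ∨ (βa ≠ βb ∧ 2 * Γ + 2 * βb * βa = 0)) := by
  subst hε1 hα1
  have hp : UnitConstantParams r σa τa σb τb βa βb Γ :=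
    ⟨hαla, by simpa using hαlb, by simpa using hαra, by simpa using hαrb, hβla, hβlb,
      by simpa using hβra, by simpa using hβrb, hΓ⟩
  rw [braidEqR_iff_sub_mul_eq_zero hca.2.1 hca.2.2 hind hp hcomma hcommb hu hv, mul_eq_zero,
    sub_eq_zero]
  tauto

/-- with constant parameters, if `ε = 1` and `α = 1`, then `r`
satisfies the braid equation iff `β_a = β_b`, or `β_a ≠ β_b` and
`2Γ + 2β_bβ_a = 0`. -/
theorem statement15 {K : Type} [Field K] (u v : ℕ) (hu : 0 < u) (hv : 0 < v)
    (huv : Nat.Coprime u v) (hroots : HasDistinctRoots K (u * v))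
    (σa τa : Equiv.Perm (Fin u)) (σb τb : Equiv.Perm (Fin v))
    (hcomma : Commute σa τa) (hcommb : Commute σb τb)
    (hfca : IsFullCycle (σa * τa)) (hfcb : IsFullCycle (σb * τb))
    (r : Inc2 K (Xf u v) →ₗ[K] Inc2 K (Xf u v))
    (hca : IsCoalgAuto r) (hnd : NonDeg r)
    (hind : Induces r (fun _ y => phiL σa σb y) (fun x _ => phiR τa τb x))
    (hsq1 : SetSq1 r (fun _ y => phiL σa σb y) (fun x _ => phiR τa τb x))
    (α βa βb ε Γ : K) (hα : α ≠ 0) (hε : ε = 1 ∨ ε = -1)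
    (hαla : ∀ (i k : Fin u) (l : Fin v),
      alphaL r (phiL σa σb) (phiR τa τb) (Af i) (Af k) (Bf l) = α)
    (hαlb : ∀ (j : Fin v) (k : Fin u) (l : Fin v),
      alphaL r (phiL σa σb) (phiR τa τb) (Bf j) (Af k) (Bf l) = ε * α)
    (hαra : ∀ (i k : Fin u) (l : Fin v),
      alphaR r (phiL σa σb) (phiR τa τb) (Af i) (Af k) (Bf l) = 1 / α)
    (hαrb : ∀ (j : Fin v) (k : Fin u) (l : Fin v),
      alphaR r (phiL σa σb) (phiR τa τb) (Bf j) (Af k) (Bf l) = ε / α)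
    (hβla : ∀ (i k : Fin u) (l : Fin v),
      betaL r (phiL σa σb) (phiR τa τb) (Af i) (Af k) (Bf l) = βa)
    (hβlb : ∀ (j : Fin v) (k : Fin u) (l : Fin v),
      betaL r (phiL σa σb) (phiR τa τb) (Bf j) (Af k) (Bf l) = βb)
    (hβra : ∀ (i k : Fin u) (l : Fin v),
      betaR r (phiL σa σb) (phiR τa τb) (Af i) (Af k) (Bf l) = -βa / α)
    (hβrb : ∀ (j : Fin v) (k : Fin u) (l : Fin v),
      betaR r (phiL σa σb) (phiR τa τb) (Bf j) (Af k) (Bf l) = -(ε * βb) / α)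
    (hΓ : ∀ (i : Fin u) (j : Fin v) (k : Fin u) (l : Fin v),
      Gam r (phiL σa σb) (phiR τa τb) (Af i) (Bf j) (Af k) (Bf l) = Γ)
    (hε1 : ε = 1) (hα1 : α = 1)
    : BraidEqR r ↔ (βa = βb ∨ (βa ≠ βb ∧ 2 * Γ + 2 * βb * βa = 0)) :=
  statement15_general u v hu hv σa τa σb τb hcomma hcommb r hca hind α βa βb ε Γ hαla hαlb hαra hαrb
    hβla hβlb hβra hβrb hΓ hε1 hα1

end BraidPaper
end
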